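/- arXiv:2502.13671 — 11 statements merged into one kernel-verified Lean document; each statement's English description precedes it below -/
import Mathlib

section
/- An allocation A of indivisible items to n agents with monotone valuations is envy-freeable (i.e., there exists a payment vector p ≥ 0 such that for all agents i, j: v_i(A_i) + p_i ≥ v_i(A_j) + p_j) if and only if A maximizes total utilitarian welfare over all permutations of its bundles, i.e., for every permutation π of the agents, ∑_i v_i(A_i) ≥ ∑_i v_i(A_{π(i)}). -/
open Finset

section EF

variable {n : ℕ} (w : Fin n → Fin n → ℝ)

/-- weight of a path -/
def pw : List (Fin n) → ℝ
  | [] => 0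
  | [_] => 0
  | i :: j :: l => w i j + pw (j :: l)

lemma pw_cons_cons (i j : Fin n) (l : List (Fin n)) :
    pw w (i :: j :: l) = w i j + pw w (j :: l) := rfl

lemma pw_append : ∀ (u : List (Fin n)) (x : Fin n) (t : List (Fin n)),
    pw w (u ++ x :: t) = pw w (u ++ [x]) + pw w (x :: t)
  | [], x, t => by simp [pw]
  | [a], x, t => by simp [pw_cons_cons, pw]
  | a :: b :: u, x, t => by
    have := pw_append (b :: u) x t
    simp only [List.cons_append, pw_cons_cons] at *
    rw [this]; ring

/-- Closing a cycle: if `g` maps each vertex of the path to the next one. -/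
lemma pw_close : ∀ (t : List (Fin n)) (x y : Fin n) (g : Fin n → Fin n),
    (x :: t).map g = t ++ [y] →
    pw w (x :: (t ++ [y])) = ((x :: t).map (fun i => w i (g i))).sum
  | [], x, y, g, h => by
    simp only [List.map_cons, List.map_nil, List.nil_append, List.cons.injEq, and_true] at h
    simp [pw_cons_cons, pw, h]
  | z :: t', x, y, g, h => by
    simp only [List.map_cons, List.cons_append, List.cons.injEq] at h
    obtain ⟨hgx, ht⟩ := h
    have ih := pw_close t' z y g (by simpa using ht)
    simp only [List.cons_append, pw_cons_cons, ih, List.map_cons, List.sum_cons, hgx]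

/-- Bellman iteration: max path weight over paths of length ≤ k starting at i. -/
def q : ℕ → Fin n → ℝ
  | 0, _ => 0
  | (k+1), i => Finset.univ.sup' ⟨i, Finset.mem_univ i⟩ (fun j => w i j + q k j)

lemma q_succ_eq (k : ℕ) (i : Fin n) :
    q w (k+1) i = Finset.univ.sup' ⟨i, Finset.mem_univ i⟩ (fun j => w i j + q w k j) := rfl

lemma le_q_succ (k : ℕ) (i j : Fin n) : w i j + q w k j ≤ q w (k+1) i := by
  rw [q_succ_eq]
  exact Finset.le_sup' (fun j => w i j + q w k j) (Finset.mem_univ j)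

lemma q_succ_le_self (hself : ∀ i, w i i = 0) (k : ℕ) (i : Fin n) :
    q w k i ≤ q w (k+1) i := by
  have h := le_q_succ w k i i
  rw [hself i, zero_add] at h
  exact h

lemma q_mono (hself : ∀ i, w i i = 0) {k k' : ℕ} (h : k ≤ k') (i : Fin n) :
    q w k i ≤ q w k' i := by
  induction h with
  | refl => exact le_refl _
  | step h ih => exact le_trans ih (q_succ_le_self w hself _ _)

lemma q_nonneg (hself : ∀ i, w i i = 0) (k : ℕ) (i : Fin n) : 0 ≤ q w k i :=
  q_mono w hself (Nat.zero_le k) i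

lemma pw_le_q (hself : ∀ i, w i i = 0) :
    ∀ (t : List (Fin n)) (i : Fin n) (k : ℕ), t.length ≤ k →
    pw w (i :: t) ≤ q w k i
  | [], i, k, _ => by simpa [pw] using q_nonneg w hself k i
  | j :: t, i, k, hk => by
    obtain ⟨k, rfl⟩ : ∃ k', k = k' + 1 := ⟨k - 1, by simp at hk; omega⟩
    rw [pw_cons_cons]
    calc w i j + pw w (j :: t) ≤ w i j + q w k j := by
          have := pw_le_q hself t j k (by simp at hk; omega)
          linarith
      _ ≤ q w (k+1) i := le_q_succ w k i j

lemma q_eq_pw : ∀ (k : ℕ) (i : Fin n), ∃ t : List (Fin n), pw w (i :: t) = q w k i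
  | 0, i => ⟨[], rfl⟩
  | (k+1), i => by
    obtain ⟨j, -, hj⟩ := Finset.exists_mem_eq_sup' (⟨i, Finset.mem_univ i⟩ :
      (Finset.univ : Finset (Fin n)).Nonempty) (fun j => w i j + q w k j)
    obtain ⟨t, ht⟩ := q_eq_pw k j
    exact ⟨j :: t, by rw [pw_cons_cons, ht, q_succ_eq, hj]⟩

lemma exists_dup_decomp {α : Type*} :
    ∀ (l : List α), ¬ l.Nodup →
      ∃ (a₁ : List α) (x : α) (a₂ rest : List α),
        l = a₁ ++ x :: a₂ ++ x :: rest ∧ (x :: a₂).Nodup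
  | [], h => absurd List.nodup_nil h
  | (y :: t), h => by
    by_cases ht : t.Nodup
    · have hy : y ∈ t := by
        by_contra hy
        exact h (List.nodup_cons.mpr ⟨hy, ht⟩)
      obtain ⟨s, r, rfl⟩ := List.append_of_mem hy
      have hn := List.nodup_append'.mp ht
      refine ⟨[], y, s, r, by simp, List.nodup_cons.mpr ⟨?_, hn.1⟩⟩
      intro hys
      exact hn.2.2 hys List.mem_cons_self
    · obtain ⟨a₁, x, a₂, rest, hl, hnd⟩ := exists_dup_decomp t ht
      exact ⟨y :: a₁, x, a₂, rest, by rw [hl]; simp, hnd⟩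

lemma shorten
    (hcyc : ∀ (x : Fin n) (t : List (Fin n)), (x :: t).Nodup → pw w (x :: (t ++ [x])) ≤ 0) :
    ∀ (N : ℕ) (x : Fin n) (t : List (Fin n)), t.length ≤ N →
      ∃ t' : List (Fin n), (x :: t').Nodup ∧ pw w (x :: t) ≤ pw w (x :: t') := by
  intro N
  induction N with
  | zero =>
    intro x t ht
    obtain rfl := List.length_eq_zero_iff.mp (Nat.le_zero.mp ht)
    exact ⟨[], List.nodup_singleton x, le_refl _⟩
  | succ N ih =>
    intro x t ht
    by_cases hnd : (x :: t).Nodup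
    · exact ⟨t, hnd, le_refl _⟩
    · obtain ⟨a₁, y, a₂, rest, hl, hya⟩ := exists_dup_decomp _ hnd
      have h1 : (x :: t : List (Fin n)) = (a₁ ++ y :: a₂) ++ y :: rest := by
        simp [hl]
      have h2 : pw w ((a₁ ++ y :: a₂) ++ y :: rest)
          = pw w ((a₁ ++ y :: a₂) ++ [y]) + pw w (y :: rest) := pw_append w _ y rest
      have h3 : ((a₁ ++ y :: a₂) ++ [y] : List (Fin n)) = a₁ ++ y :: (a₂ ++ [y]) := by simp
      have h4 : pw w (a₁ ++ y :: (a₂ ++ [y]))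
          = pw w (a₁ ++ [y]) + pw w (y :: (a₂ ++ [y])) := pw_append w a₁ y _
      have h5 : pw w (y :: (a₂ ++ [y])) ≤ 0 := hcyc y a₂ hya
      have key : pw w (x :: t) ≤ pw w (a₁ ++ y :: rest) := by
        calc pw w (x :: t)
            = pw w ((a₁ ++ y :: a₂) ++ [y]) + pw w (y :: rest) := by rw [h1, h2]
          _ = (pw w (a₁ ++ [y]) + pw w (y :: (a₂ ++ [y]))) + pw w (y :: rest) := by
              rw [h3, h4]
          _ ≤ pw w (a₁ ++ [y]) + pw w (y :: rest) := by linarith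
          _ = pw w (a₁ ++ y :: rest) := (pw_append w a₁ y rest).symm
      have hlen : a₁.length + rest.length ≤ N := by
        have := congrArg List.length h1
        simp at this
        omega
      cases a₁ with
      | nil =>
        simp only [List.nil_append, List.cons.injEq] at h1
        obtain ⟨rfl, -⟩ := h1
        obtain ⟨t', hnd', hle⟩ := ih x rest (by simpa using hlen)
        exact ⟨t', hnd', le_trans (by simpa using key) hle⟩
      | cons a a₁' =>
        simp only [List.cons_append, List.cons.injEq] at h1
        obtain ⟨rfl, -⟩ := h1
        obtain ⟨t', hnd', hle⟩ := ih x (a₁' ++ y :: rest) (by simp at hlen ⊢; omega)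
        exact ⟨t', hnd', le_trans (by simpa using key) hle⟩

end EF

/-- An allocation with monotone valuations is envy-freeable iff it maximizes
utilitarian welfare over all permutations of its bundles. -/
theorem stmt0 {M : Type*} [Fintype M] [DecidableEq M]
    {n : ℕ} (A : Fin n → Finset M)
    (hpart : ∀ e : M, ∃! i : Fin n, e ∈ A i)
    (v : Fin n → Finset M → ℝ)
    (hnonneg : ∀ i S, 0 ≤ v i S)
    (hmono : ∀ i, ∀ S T : Finset M, S ⊆ T → v i S ≤ v i T) :
    (∃ p : Fin n → ℝ, (∀ i, 0 ≤ p i) ∧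
        ∀ i j, v i (A j) + p j ≤ v i (A i) + p i) ↔
      ∀ π : Equiv.Perm (Fin n), ∑ i, v i (A (π i)) ≤ ∑ i, v i (A i) := by
  constructor
  · rintro ⟨p, -, hp⟩ π
    have h2 : ∑ i, (v i (A (π i)) + p (π i)) ≤ ∑ i, (v i (A i) + p i) :=
      Finset.sum_le_sum fun i _ => hp i (π i)
    have h3 : ∑ i, p (π i) = ∑ i, p i := Equiv.sum_comp π p
    rw [Finset.sum_add_distrib, Finset.sum_add_distrib, h3] at h2
    linarith
  · intro hπ
    set w : Fin n → Fin n → ℝ := fun i j => v i (A j) - v i (A i) with hw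
    have hself : ∀ i, w i i = 0 := fun i => by simp [hw]
    have hcyc : ∀ (x : Fin n) (t : List (Fin n)), (x :: t).Nodup →
        pw w (x :: (t ++ [x])) ≤ 0 := by
      intro x t hnd
      set c : List (Fin n) := x :: t with hc
      have hmap : c.map c.formPerm = t ++ [x] := by
        apply List.ext_getElem
        · simp [hc]
        · intro i h1 h2
          simp only [List.getElem_map]
          rw [List.formPerm_apply_getElem c hnd i (by simpa using h1)]
          have hlc : c.length = t.length + 1 := by simp [hc]
          rcases lt_or_eq_of_le (Nat.le_of_lt_succ (by simpa [hc] using h1)) with h | h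
          · have hm : (i + 1) % c.length = i + 1 := Nat.mod_eq_of_lt (by omega)
            simp only [hc] at hm ⊢; simp only [hm]
            rw [List.getElem_cons_succ, List.getElem_append_left (by omega)]
          · subst h
            have hm : (t.length + 1) % c.length = 0 := by simp [hlc]
            simp only [hm, hc, List.getElem_cons_zero]
            rw [List.getElem_append_right (by omega)]
            simp
      have e1 : pw w (x :: (t ++ [x])) = (c.map fun i => w i (c.formPerm i)).sum :=
        pw_close w t x x c.formPerm hmap
      have e3 : (c.map fun i => w i (c.formPerm i)).sum = ∑ i ∈ c.toFinset, w i (c.formPerm i) :=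
        (List.sum_toFinset _ hnd).symm
      have e4 : ∑ i ∈ c.toFinset, w i (c.formPerm i) = ∑ i, w i (c.formPerm i) := by
        apply Finset.sum_subset (Finset.subset_univ _)
        intro i _ hi
        rw [List.formPerm_apply_of_notMem (by simpa using hi), hself]
      have e5 : ∑ i, w i (c.formPerm i) ≤ 0 := by
        have h := hπ c.formPerm
        have : ∑ i, w i (c.formPerm i) = ∑ i, v i (A (c.formPerm i)) - ∑ i, v i (A i) := by
          rw [← Finset.sum_sub_distrib]
        linarith
      linarith
    refine ⟨fun i => q w n i, fun i => q_nonneg w hself n i, fun i j => ?_⟩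
    have key : q w (n+1) i ≤ q w n i := by
      obtain ⟨t, ht⟩ := q_eq_pw w (n+1) i
      obtain ⟨t', hnd', hle⟩ := shorten w hcyc t.length i t (le_refl _)
      have hlen : t'.length ≤ n := by
        have := hnd'.length_le_card
        simp at this
        omega
      calc q w (n+1) i = pw w (i :: t) := ht.symm
        _ ≤ pw w (i :: t') := hle
        _ ≤ q w n i := pw_le_q w hself t' i n hlen
    have h := le_q_succ w n i j
    have hwij : w i j = v i (A j) - v i (A i) := rfl
    rw [hwij] at h
    linarith
end

section
/- An allocation A of indivisible items to n agents with monotone valuations is envy-freeable if and only if the envy graph D_A (the complete weighted directed graph on the agents where arc (i,j) has weight w(i,j) = v_i(A_j) − v_i(A_i)) contains no directed cycle of positive total weight. -/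
namespace Stmt1Aux

variable {n : ℕ}

/-- weight of the (non-cyclic) path `c 0, c 1, ..., c k`. -/
def pw (W : Fin n → Fin n → ℝ) (c : ℕ → Fin n) (k : ℕ) : ℝ :=
  ∑ t ∈ Finset.range k, W (c t) (c (t + 1))

theorem pw_congr (W : Fin n → Fin n → ℝ) {c c' : ℕ → Fin n} {k : ℕ}
    (h : ∀ t ≤ k, c t = c' t) : pw W c k = pw W c' k := by
  unfold pw
  refine Finset.sum_congr rfl fun t ht => ?_
  rw [Finset.mem_range] at ht
  rw [h t (by omega), h (t + 1) (by omega)]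

/-- No positive cycles, for ℕ-indexed paths. -/
theorem cycle_le (W : Fin n → Fin n → ℝ)
    (H : ∀ (k : ℕ) (c : Fin (k + 1) → Fin n), Function.Injective c →
      ∑ t : Fin (k + 1), W (c t) (c (t + 1)) ≤ 0)
    (k : ℕ) (c : ℕ → Fin n) (hinj : Set.InjOn c (Set.Iic k)) :
    pw W c k + W (c k) (c 0) ≤ 0 := by
  have hI : Function.Injective (fun t : Fin (k + 1) => c t.val) := by
    intro a b hab
    have := hinj (Set.mem_Iic.2 (Nat.lt_succ_iff.1 a.isLt))
      (Set.mem_Iic.2 (Nat.lt_succ_iff.1 b.isLt)) hab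
    exact Fin.ext this
  have h := H k (fun t => c t.val) hI
  calc pw W c k + W (c k) (c 0)
      = ∑ t : Fin (k + 1), W (c t.val) (c ((t + 1).val)) := by
        rw [Fin.sum_univ_castSucc]
        congr 1
        · rw [pw, ← Fin.sum_univ_eq_sum_range]
          refine Finset.sum_congr rfl fun t _ => ?_
          have h2 : ((t.castSucc : Fin (k + 1)) + 1).val = t.val + 1 :=
            Fin.val_add_one_of_lt (Fin.castSucc_lt_last t)
          simp [h2, Fin.coe_castSucc]
        · have : (Fin.last k + 1) = (0 : Fin (k + 1)) := by
            simp
          rw [this]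
          simp
    _ ≤ 0 := h

end Stmt1Aux
namespace Stmt1Aux

variable {n : ℕ}

def dec (hn : 0 < n) (d : Fin n → Fin n) : ℕ → Fin n :=
  fun t => d ⟨t % n, Nat.mod_lt _ hn⟩

open Classical in
noncomputable def pval (W : Fin n → Fin n → ℝ) (hn : 0 < n) (i : Fin n)
    (x : Fin n × (Fin n → Fin n)) : ℝ :=
  if dec hn x.2 0 = i ∧ Set.InjOn (dec hn x.2) (Set.Iic (x.1 : ℕ))
  then pw W (dec hn x.2) (x.1 : ℕ) else 0

noncomputable def pfun (W : Fin n → Fin n → ℝ) (hn : 0 < n) (i : Fin n) : ℝ :=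
  haveI : Nonempty (Fin n) := ⟨⟨0, hn⟩⟩
  Finset.univ.sup' Finset.univ_nonempty (pval W hn i)

theorem le_pfun (W : Fin n → Fin n → ℝ) (hn : 0 < n) {c : ℕ → Fin n} {k : ℕ} {i : Fin n}
    (h0 : c 0 = i) (hinj : Set.InjOn c (Set.Iic k)) : pw W c k ≤ pfun W hn i := by
  haveI : Nonempty (Fin n) := ⟨⟨0, hn⟩⟩
  have hk : k < n := by
    have h1 : (Finset.Iic k).card ≤ (Finset.univ : Finset (Fin n)).card :=
      Finset.card_le_card_of_injOn c (fun a _ => Finset.mem_univ _) (by simpa using hinj)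
    simp [Nat.card_Iic] at h1
    omega
  set x : Fin n × (Fin n → Fin n) := (⟨k, hk⟩, fun j : Fin n => c j.val) with hxdef
  have hdec : ∀ t ≤ k, dec hn x.2 t = c t := by
    intro t ht
    show c (t % n) = c t
    rw [Nat.mod_eq_of_lt (by omega)]
  have hcond : dec hn x.2 0 = i ∧ Set.InjOn (dec hn x.2) (Set.Iic ((x.1 : Fin n) : ℕ)) := by
    constructor
    · rw [hdec 0 (by omega), h0]
    · intro a ha b hb hab
      simp only [Set.mem_Iic] at ha hb
      rw [hdec a ha, hdec b hb] at hab
      exact hinj ha hb hab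
  have hval : pval W hn i x = pw W c k := by
    rw [pval, if_pos hcond]
    exact pw_congr W (fun t ht => hdec t ht)
  calc pw W c k = pval W hn i x := hval.symm
    _ ≤ pfun W hn i := Finset.le_sup' _ (Finset.mem_univ x)

theorem pfun_nonneg (W : Fin n → Fin n → ℝ) (hn : 0 < n) (i : Fin n) :
    0 ≤ pfun W hn i := by
  have h : pw W (fun _ => i) 0 ≤ pfun W hn i :=
    le_pfun W hn rfl (by intro a ha b hb _; simp at ha hb; omega)
  simpa [pw] using h

theorem pfun_main (W : Fin n → Fin n → ℝ)
    (H : ∀ (k : ℕ) (c : Fin (k + 1) → Fin n), Function.Injective c →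
      ∑ t : Fin (k + 1), W (c t) (c (t + 1)) ≤ 0)
    (hn : 0 < n) (i j : Fin n) :
    W i j + pfun W hn j ≤ pfun W hn i := by
  haveI : Nonempty (Fin n) := ⟨⟨0, hn⟩⟩
  have hWij : W i j ≤ pfun W hn i := by
    by_cases hij : i = j
    · subst hij
      have h1 := cycle_le W H 0 (fun _ => i)
        (by intro a ha b hb _; simp only [Set.mem_Iic, Nat.le_zero] at ha hb; omega)
      have h2 := pfun_nonneg W hn i
      simp only [pw, Finset.range_zero, Finset.sum_empty, zero_add] at h1
      linarith
    · have hpw : pw W (fun t : ℕ => if t = 0 then i else j) 1 = W i j := by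
        simp [pw]
      have hinj2 : Set.InjOn (fun t : ℕ => if t = 0 then i else j) (Set.Iic 1) := by
        intro a ha b hb hab
        simp only [Set.mem_Iic] at ha hb
        simp only [] at hab
        by_cases ha0 : a = 0 <;> by_cases hb0 : b = 0
        · omega
        · rw [if_pos ha0, if_neg hb0] at hab; exact absurd hab hij
        · rw [if_neg ha0, if_pos hb0] at hab; exact absurd hab.symm hij
        · omega
      have h3 := le_pfun W hn (c := fun t : ℕ => if t = 0 then i else j) (k := 1)
        (i := i) rfl hinj2
      linarith
  obtain ⟨x, -, hx⟩ := Finset.exists_mem_eq_sup' Finset.univ_nonempty (pval W hn j)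
  have hpf : pfun W hn j = pval W hn j x := by
    rw [pfun]; exact hx
  by_cases hcond : dec hn x.2 0 = j ∧ Set.InjOn (dec hn x.2) (Set.Iic ((x.1 : Fin n) : ℕ))
  · have hpj : pfun W hn j = pw W (dec hn x.2) ((x.1 : Fin n) : ℕ) := by
      rw [hpf, pval, if_pos hcond]
    set c : ℕ → Fin n := dec hn x.2 with hc
    set k : ℕ := ((x.1 : Fin n) : ℕ) with hkdef
    obtain ⟨hc0, hinj⟩ := hcond
    by_cases hi : ∃ s, s ≤ k ∧ c s = i
    · obtain ⟨s, hs, hcs⟩ := hi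
      have hcyc := cycle_le W H s c
        (hinj.mono (fun a ha => Set.mem_Iic.2 (le_trans (Set.mem_Iic.1 ha) hs)))
      rw [hcs, hc0] at hcyc
      have hsufinj : Set.InjOn (fun t => c (s + t)) (Set.Iic (k - s)) := by
        intro a ha b hb hab
        simp only [Set.mem_Iic] at ha hb
        have h4 := hinj (Set.mem_Iic.2 (by omega : s + a ≤ k))
          (Set.mem_Iic.2 (by omega : s + b ≤ k)) hab
        omega
      have hsuf : pw W (fun t => c (s + t)) (k - s) ≤ pfun W hn i :=
        le_pfun W hn (c := fun t => c (s + t)) (i := i) hcs hsufinj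
      have hsplit : pw W c k = pw W c s + pw W (fun t => c (s + t)) (k - s) := by
        have hks : s + (k - s) = k := by omega
        calc pw W c k = ∑ t ∈ Finset.range (s + (k - s)), W (c t) (c (t + 1)) := by
              rw [pw, hks]
          _ = (∑ t ∈ Finset.range s, W (c t) (c (t + 1)))
              + ∑ t ∈ Finset.range (k - s), W (c (s + t)) (c (s + t + 1)) :=
              Finset.sum_range_add _ _ _
          _ = pw W c s + pw W (fun t => c (s + t)) (k - s) := by
              rw [pw, pw]
              simp only [Nat.add_assoc]
      linarith
    · push_neg at hi
      set c4 : ℕ → Fin n := fun t => if t = 0 then i else c (t - 1) with hc4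
      have hc4inj : Set.InjOn c4 (Set.Iic (k + 1)) := by
        intro a ha b hb hab
        simp only [Set.mem_Iic] at ha hb
        by_cases ha0 : a = 0 <;> by_cases hb0 : b = 0
        · omega
        · simp only [hc4, if_pos ha0, if_neg hb0] at hab
          exact absurd hab.symm (hi (b - 1) (by omega))
        · simp only [hc4, if_neg ha0, if_pos hb0] at hab
          exact absurd hab (hi (a - 1) (by omega))
        · simp only [hc4, if_neg ha0, if_neg hb0] at hab
          have h5 := hinj (Set.mem_Iic.2 (by omega : a - 1 ≤ k))
            (Set.mem_Iic.2 (by omega : b - 1 ≤ k)) hab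
          omega
      have hle : pw W c4 (k + 1) ≤ pfun W hn i :=
        le_pfun W hn (c := c4) (i := i) (by simp [hc4]) hc4inj
      have heq : pw W c4 (k + 1) = W i j + pw W c k := by
        rw [pw, Finset.sum_range_succ']
        have h0 : W (c4 0) (c4 (0 + 1)) = W i j := by
          have e1 : c4 0 = i := by simp [hc4]
          have e2 : c4 (0 + 1) = j := by
            rw [← hc0]; simp [hc4]
          rw [e1, e2]
        have h6 : ∀ t, W (c4 (t + 1)) (c4 (t + 1 + 1)) = W (c t) (c (t + 1)) := by
          intro t
          have e1 : c4 (t + 1) = c t := by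
            simp only [hc4, if_neg (by omega : t + 1 ≠ 0)]
            congr 1
          have e2 : c4 (t + 1 + 1) = c (t + 1) := by
            simp only [hc4, if_neg (by omega : t + 1 + 1 ≠ 0)]
            congr 1
          rw [e1, e2]
        have h7 : (∑ t ∈ Finset.range k, W (c4 (t + 1)) (c4 (t + 1 + 1)))
            = ∑ t ∈ Finset.range k, W (c t) (c (t + 1)) :=
          Finset.sum_congr rfl fun t _ => h6 t
        rw [h0, h7, pw, add_comm]
      linarith
  · have hpj : pfun W hn j = 0 := by rw [hpf, pval, if_neg hcond]
    rw [hpj, add_zero]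
    exact hWij

end Stmt1Aux

/-- An allocation with monotone valuations is envy-freeable iff the envy graph
(arc weight `w(i,j) = v i (A j) - v i (A i)`) has no directed cycle of positive
total weight.  A cycle is encoded by an injective map `c : Fin (k+1) → Fin n`,
with arcs from `c t` to `c (t+1)` (indices cyclically). -/
theorem stmt1 {M : Type*} [Fintype M] [DecidableEq M]
    {n : ℕ} (A : Fin n → Finset M)
    (hpart : ∀ e : M, ∃! i : Fin n, e ∈ A i)
    (v : Fin n → Finset M → ℝ)
    (hnonneg : ∀ i S, 0 ≤ v i S)
    (hmono : ∀ i, ∀ S T : Finset M, S ⊆ T → v i S ≤ v i T) :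
    (∃ p : Fin n → ℝ, (∀ i, 0 ≤ p i) ∧
        ∀ i j, v i (A j) + p j ≤ v i (A i) + p i) ↔
      ∀ (k : ℕ) (c : Fin (k + 1) → Fin n), Function.Injective c →
        ∑ t : Fin (k + 1), (v (c t) (A (c (t + 1))) - v (c t) (A (c t))) ≤ 0 := by
  constructor
  · rintro ⟨p, hp0, hp⟩ k c hcinj
    have h1 : ∀ t : Fin (k + 1),
        v (c t) (A (c (t + 1))) - v (c t) (A (c t)) ≤ p (c t) - p (c (t + 1)) := by
      intro t
      have := hp (c t) (c (t + 1))
      linarith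
    have h2 : ∑ t : Fin (k + 1), (p (c t) - p (c (t + 1))) = 0 := by
      rw [Finset.sum_sub_distrib, sub_eq_zero]
      exact (Fintype.sum_equiv (Equiv.addRight 1) (fun t => p (c (t + 1)))
        (fun t => p (c t)) (fun t => rfl)).symm
    calc ∑ t : Fin (k + 1), (v (c t) (A (c (t + 1))) - v (c t) (A (c t)))
        ≤ ∑ t : Fin (k + 1), (p (c t) - p (c (t + 1))) :=
          Finset.sum_le_sum (fun t _ => h1 t)
      _ = 0 := h2
  · intro H
    rcases Nat.eq_zero_or_pos n with hn0 | hn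
    · subst hn0
      exact ⟨fun _ => 0, fun i => le_refl 0, fun i => i.elim0⟩
    · refine ⟨Stmt1Aux.pfun (fun i j => v i (A j) - v i (A i)) hn,
        fun i => Stmt1Aux.pfun_nonneg _ hn i, fun i j => ?_⟩
      have h := Stmt1Aux.pfun_main (fun i j => v i (A j) - v i (A i)) H hn i j
      linarith
end

section
/- If an allocation A is envy-freeable, then setting each agent i's payment p_i equal to the maximum total weight of a directed path starting at vertex i in the envy graph D_A yields an envy-free allocation with payments, i.e., v_i(A_i) + p_i ≥ v_i(A_j) + p_j for all agents i, j. -/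
/-- If an allocation is envy-freeable (no positive-weight directed cycle in the
envy graph), then paying each agent the maximum total weight of a directed
(simple) path starting at her vertex in the envy graph yields an envy-free
allocation with payments.  A path starting at `i` is an injective map
`c : Fin (k+1) → Fin n` with `c 0 = i`; its weight is the sum of the arc
weights `v (c t) (A (c (t+1))) - v (c t) (A (c t))` along it. -/
theorem stmt2 {M : Type*} [Fintype M] [DecidableEq M]
    {n : ℕ} (A : Fin n → Finset M)
    (hpart : ∀ e : M, ∃! i : Fin n, e ∈ A i)
    (v : Fin n → Finset M → ℝ)
    (hnonneg : ∀ i S, 0 ≤ v i S)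
    (hmono : ∀ i, ∀ S T : Finset M, S ⊆ T → v i S ≤ v i T)
    (hnoPosCycle : ∀ (k : ℕ) (c : Fin (k + 1) → Fin n), Function.Injective c →
      ∑ t : Fin (k + 1), (v (c t) (A (c (t + 1))) - v (c t) (A (c t))) ≤ 0)
    (p : Fin n → ℝ)
    (hp : ∀ i : Fin n, IsGreatest
      {x : ℝ | ∃ (k : ℕ) (c : Fin (k + 1) → Fin n), Function.Injective c ∧ c 0 = i ∧
        x = ∑ t : Fin k,
          (v (c t.castSucc) (A (c t.succ)) - v (c t.castSucc) (A (c t.castSucc)))}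
      (p i)) :
    ∀ i j, v i (A j) + p j ≤ v i (A i) + p i := by
  intro i j
  obtain ⟨⟨k, c, hcinj, hc0, hpj⟩, _⟩ := hp j
  obtain ⟨_, hub_i⟩ := hp i
  by_cases hir : i ∈ Set.range c
  · -- i appears on the optimal path for j: split it at i
    obtain ⟨t0, ht0⟩ := hir
    set a : ℕ := t0.val with ha
    have hak : a ≤ k := Nat.lt_succ_iff.mp t0.isLt
    -- a ℕ-indexed version of the path
    set cc : ℕ → Fin n := fun x => c ⟨min x k, Nat.lt_succ_of_le (Nat.min_le_right x k)⟩
      with hccdef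
    have hcc : ∀ x, (hx : x ≤ k) → cc x = c ⟨x, Nat.lt_succ_of_le hx⟩ := by
      intro x hx
      simp only [hccdef]
      congr 1
      exact Fin.ext (Nat.min_eq_left hx)
    set g : ℕ → ℝ := fun x => v (cc x) (A (cc (x + 1))) - v (cc x) (A (cc x)) with hgdef
    have hpj' : p j = ∑ x ∈ Finset.range k, g x := by
      rw [hpj, Finset.sum_range]
      refine Finset.sum_congr rfl fun t _ => ?_
      have h1 : cc t.val = c t.castSucc := hcc t.val (le_of_lt t.isLt)
      have h2 : cc (t.val + 1) = c t.succ := hcc (t.val + 1) t.isLt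
      simp only [hgdef, h1, h2]
    -- split the sum at a
    have hsum_split : ∑ x ∈ Finset.range k, g x
        = ∑ x ∈ Finset.range a, g x + ∑ x ∈ Finset.range (k - a), g (a + x) := by
      have h : a + (k - a) = k := by omega
      have := Finset.sum_range_add g a (k - a)
      rw [h] at this
      exact this
    -- the cycle c 0, c 1, ..., c a = i, taken cyclically
    have hcyc : ∑ x ∈ Finset.range a, g x + (v i (A j) - v i (A i)) ≤ 0 := by
      have hd : ∀ s : Fin (a + 1), cc s.val = c ⟨s.val, by omega⟩ :=
        fun s => hcc s.val (by omega)
      have hdinj : Function.Injective (fun s : Fin (a + 1) => cc s.val) := by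
        intro s t hst
        have hst' : cc s.val = cc t.val := hst
        rw [hd s, hd t] at hst'
        have := congrArg Fin.val (hcinj hst')
        exact Fin.ext this
      have hkey := hnoPosCycle a (fun s : Fin (a + 1) => cc s.val) hdinj
      rw [Fin.sum_univ_castSucc] at hkey
      have hlast : (Fin.last a + 1 : Fin (a + 1)) = 0 := by
        ext; simp [Fin.add_def]
      have hcca : cc a = i := by rw [hcc a hak, ← ht0]
      have hcc0 : cc 0 = j := by
        rw [hcc 0 (by omega), ← hc0]
        congr 1
      have hterm : ∀ s : Fin a,
          (v (cc (s.castSucc : Fin (a+1)).val) (A (cc ((s.castSucc + 1 : Fin (a+1))).val))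
            - v (cc (s.castSucc : Fin (a+1)).val) (A (cc (s.castSucc : Fin (a+1)).val)))
          = g s.val := by
        intro s
        have h1 : (s.castSucc + 1 : Fin (a + 1)) = s.succ := by
          ext
          rw [Fin.val_add_one_of_lt]
          · simp
          · exact Fin.castSucc_lt_last s
        rw [h1]
        simp [hgdef]
      calc ∑ x ∈ Finset.range a, g x + (v i (A j) - v i (A i))
          = ∑ s : Fin a,
              (v (cc (s.castSucc : Fin (a+1)).val) (A (cc ((s.castSucc + 1 : Fin (a+1))).val))
                - v (cc (s.castSucc : Fin (a+1)).val) (A (cc (s.castSucc : Fin (a+1)).val)))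
            + (v (cc (Fin.last a).val) (A (cc ((Fin.last a + 1 : Fin (a+1))).val))
                - v (cc (Fin.last a).val) (A (cc (Fin.last a).val))) := by
            rw [hlast]
            simp only [hterm, Fin.val_last, Fin.val_zero, hcca, hcc0]
            rw [Finset.sum_range]
        _ ≤ 0 := hkey
    -- the suffix path starting at i
    have hsuffix : ∑ x ∈ Finset.range (k - a), g (a + x) ≤ p i := by
      apply hub_i
      refine ⟨k - a, fun s : Fin (k - a + 1) => cc (a + s.val), ?_, ?_, ?_⟩
      · intro s t hst
        have hst' : cc (a + s.val) = cc (a + t.val) := hst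
        have hs : a + s.val ≤ k := by omega
        have ht : a + t.val ≤ k := by omega
        rw [hcc _ hs, hcc _ ht] at hst'
        have h2 : a + s.val = a + t.val := congrArg Fin.val (hcinj hst')
        exact Fin.ext (by omega)
      · show cc (a + 0) = i
        rw [Nat.add_zero, hcc a hak, ← ht0]
      · rw [Finset.sum_range]
        refine Finset.sum_congr rfl fun t _ => ?_
        simp only [hgdef, Fin.coe_castSucc, Fin.val_succ]
        rw [Nat.add_assoc]
    linarith [hpj', hsum_split]
  · -- i is not on the path: prepend i to the path for j
    have hmem : (v i (A j) - v i (A i) + p j) ∈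
        {x : ℝ | ∃ (k : ℕ) (c : Fin (k + 1) → Fin n), Function.Injective c ∧ c 0 = i ∧
          x = ∑ t : Fin k,
            (v (c t.castSucc) (A (c t.succ)) - v (c t.castSucc) (A (c t.castSucc)))} := by
      refine ⟨k + 1, (Fin.cons i c : Fin (k + 1 + 1) → Fin n),
        Fin.cons_injective_of_injective hir hcinj, Fin.cons_zero _ _, ?_⟩
      rw [Fin.sum_univ_succ]
      have h0 : ((0 : Fin (k + 1)).castSucc : Fin (k + 2)) = 0 := rfl
      have h1 : ((0 : Fin (k + 1)).succ : Fin (k + 2)) = Fin.succ 0 := rfl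
      rw [h0, h1, Fin.cons_zero, Fin.cons_succ, hc0]
      have hterm : ∀ t : Fin k,
          (v ((Fin.cons i c : Fin (k + 1 + 1) → Fin n) t.succ.castSucc)
              (A ((Fin.cons i c : Fin (k + 1 + 1) → Fin n) t.succ.succ))
            - v ((Fin.cons i c : Fin (k + 1 + 1) → Fin n) t.succ.castSucc)
              (A ((Fin.cons i c : Fin (k + 1 + 1) → Fin n) t.succ.castSucc)))
          = (v (c t.castSucc) (A (c t.succ)) - v (c t.castSucc) (A (c t.castSucc))) := by
        intro t
        rw [← Fin.succ_castSucc, Fin.cons_succ, Fin.cons_succ]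
      rw [Finset.sum_congr rfl fun t _ => hterm t, ← hpj]
    have := hub_i hmem
    linarith
end

section
/- Suppose two agents i and j have additive valuations over a finite set S of items with every single item valued at most 1 by each agent, and RoundRobin(j, i, S) with j picking first produces bundles B_j and B_i. Then v_i(B_j) − v_i(B_i) ≤ 1. -/
/-- `IsRoundRobin vj vi S Bj Bi` holds when `Bj, Bi` are the bundles resulting
from some execution of round-robin on item set `S` where agent `j` (valuation
`vj`) picks first and agents alternately pick a most-valued remaining item.
The execution is encoded by the list `L` of items in picking order: the item
picked at step `t` (0-indexed; even steps belong to `j`, odd steps to `i`)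
is weakly preferred by its picker to every remaining item. -/
def IsRoundRobin {α : Type*} [DecidableEq α]
    (vj vi : α → ℝ) (S Bj Bi : Finset α) : Prop :=
  ∃ L : List α, L.Nodup ∧ L.toFinset = S ∧
    (∀ (t : ℕ) (ht : t < L.length), ∀ e ∈ L.drop t,
      if t % 2 = 0 then vj e ≤ vj (L.get ⟨t, ht⟩) else vi e ≤ vi (L.get ⟨t, ht⟩)) ∧
    Bj = (((L.zipIdx.map Prod.swap).filter (fun q => q.1 % 2 = 0)).map Prod.snd).toFinset ∧
    Bi = (((L.zipIdx.map Prod.swap).filter (fun q => q.1 % 2 = 1)).map Prod.snd).toFinset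



private lemma shiftRR {α : Type*} (r : ℕ) : ∀ (l : List α) (n m : ℕ), n % 2 = m % 2 →
    (((l.zipIdx n).map Prod.swap).filter (fun q => q.1 % 2 = r)).map Prod.snd
      = (((l.zipIdx m).map Prod.swap).filter (fun q => q.1 % 2 = r)).map Prod.snd
  | [], _, _, _ => rfl
  | a :: t, n, m, h => by
    have h2 : (n+1) % 2 = (m+1) % 2 := by omega
    simp only [List.zipIdx_cons, List.map_cons, Prod.swap_prod_mk, List.filter_cons, h]
    split <;> simp [shiftRR r t (n+1) (m+1) h2]

private def pickRR {α : Type*} (r : ℕ) (L : List α) : List α :=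
  ((L.zipIdx.map Prod.swap).filter (fun q => q.1 % 2 = r)).map Prod.snd

private lemma keyRR {α : Type*} (vi : α → ℝ) (hvi : ∀ e, 0 ≤ vi e) :
    ∀ L : List α,
    (∀ (t : ℕ) (ht : t < L.length), t % 2 = 1 → ∀ e ∈ L.drop t, vi e ≤ vi (L.get ⟨t, ht⟩)) →
    ((pickRR 0 L).map vi).sum ≤ ((L.map vi).headI) + ((pickRR 1 L).map vi).sum
  | [], _ => by simp [pickRR, List.headI, default]
  | [a], _ => by simp [pickRR, List.zipIdx]
  | a :: b :: t, pref => by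
    have pref' : ∀ (t' : ℕ) (ht' : t' < t.length), t' % 2 = 1 →
        ∀ e ∈ t.drop t', vi e ≤ vi (t.get ⟨t', ht'⟩) := by
      intro t' ht' hpar e he
      have ht2 : t' + 2 < (a :: b :: t).length := by simp; omega
      have := pref (t' + 2) ht2 (by omega) e (by simpa using he)
      simpa using this
    have ih := keyRR vi hvi t pref'
    have hb : ∀ e ∈ b :: t, vi e ≤ vi b := by
      intro e he
      have h1 : (1 : ℕ) < (a :: b :: t).length := by simp
      have := pref 1 h1 rfl e (by simpa using he)
      simpa using this
    have e0 : pickRR 0 (a :: b :: t) = a :: pickRR 0 t := by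
      simp only [pickRR, List.zipIdx_cons, List.map_cons, Prod.swap_prod_mk, List.filter_cons]
      norm_num
      exact shiftRR 0 t 2 0 rfl
    have e1 : pickRR 1 (a :: b :: t) = b :: pickRR 1 t := by
      simp only [pickRR, List.zipIdx_cons, List.map_cons, Prod.swap_prod_mk, List.filter_cons]
      norm_num
      exact shiftRR 1 t 2 0 rfl
    rw [e0, e1]
    simp only [List.map_cons, List.sum_cons, List.headI]
    cases t with
    | nil =>
      simp [pickRR] at ih ⊢
      have := hvi b; linarith
    | cons c t' =>
      have hcb : vi c ≤ vi b := hb c (by simp)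
      simp only [List.map_cons, List.headI] at ih ⊢
      linarith

private lemma pickRR_nodup {α : Type*} (r : ℕ) (L : List α) (h : L.Nodup) :
    (pickRR r L).Nodup := by
  have hs : (pickRR r L).Sublist L := by
    have := (List.filter_sublist (p := fun (q : ℕ × α) => decide (q.1 % 2 = r)) (l := L.zipIdx.map Prod.swap)).map Prod.snd
    simpa [pickRR, List.zipIdx_map_fst, Function.comp_def] using this
  exact hs.nodup h

theorem stmt4' {α : Type*} [DecidableEq α] (vj vi : α → ℝ)
    (hvj : ∀ e, 0 ≤ vj e) (hvi : ∀ e, 0 ≤ vi e)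
    (hvj1 : ∀ e, vj e ≤ 1) (hvi1 : ∀ e, vi e ≤ 1)
    (S Bj Bi : Finset α) (h : ∃ L : List α, L.Nodup ∧ L.toFinset = S ∧
    (∀ (t : ℕ) (ht : t < L.length), ∀ e ∈ L.drop t,
      if t % 2 = 0 then vj e ≤ vj (L.get ⟨t, ht⟩) else vi e ≤ vi (L.get ⟨t, ht⟩)) ∧
    Bj = (((L.zipIdx.map Prod.swap).filter (fun q => q.1 % 2 = 0)).map Prod.snd).toFinset ∧
    Bi = (((L.zipIdx.map Prod.swap).filter (fun q => q.1 % 2 = 1)).map Prod.snd).toFinset) :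
    ∑ e ∈ Bj, vi e - ∑ e ∈ Bi, vi e ≤ 1 := by
  obtain ⟨L, hnd, -, hpref, hBj, hBi⟩ := h
  have pref' : ∀ (t : ℕ) (ht : t < L.length), t % 2 = 1 →
      ∀ e ∈ L.drop t, vi e ≤ vi (L.get ⟨t, ht⟩) := by
    intro t ht hpar e he
    have := hpref t ht e he
    rw [if_neg (by omega)] at this
    exact this
  have key := keyRR vi hvi L pref'
  have hj : ∑ e ∈ Bj, vi e = ((pickRR 0 L).map vi).sum := by
    rw [hBj]; exact List.sum_toFinset vi (pickRR_nodup 0 L hnd)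
  have hi : ∑ e ∈ Bi, vi e = ((pickRR 1 L).map vi).sum := by
    rw [hBi]; exact List.sum_toFinset vi (pickRR_nodup 1 L hnd)
  have hh : (L.map vi).headI ≤ 1 := by
    cases L with
    | nil => simp [List.headI, default]
    | cons a t => simpa using hvi1 a
  rw [hj, hi]; linarith

/-- In round robin with additive valuations, each item valued at most 1,
where `j` picks first, agent `i` envies `j` by at most 1:
`v_i(B_j) - v_i(B_i) ≤ 1`. -/
theorem stmt4 {α : Type*} [DecidableEq α] (vj vi : α → ℝ)
    (hvj : ∀ e, 0 ≤ vj e) (hvi : ∀ e, 0 ≤ vi e)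
    (hvj1 : ∀ e, vj e ≤ 1) (hvi1 : ∀ e, vi e ≤ 1)
    (S Bj Bi : Finset α) (h : IsRoundRobin vj vi S Bj Bi) :
    ∑ e ∈ Bj, vi e - ∑ e ∈ Bi, vi e ≤ 1 :=
  stmt4' vj vi hvj hvi hvj1 hvi1 S Bj Bi h
end

section
/- Suppose two agents i and j have additive valuations over a finite set S of items with each item valued at most 1, and RoundRobin(j, i, S) with j first yields bundles (B_j, B_i). If assigning B_j to j and B_i to i is not locally envy-freeable, i.e., v_i(B_j) + v_j(B_i) > v_i(B_i) + v_j(B_j), then v_j(B_j) − v_j(B_i) ≤ 1. -/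
/-- Elements at even positions of a list. -/
def evensRR {α : Type*} : List α → List α
  | [] => []
  | [a] => [a]
  | a :: _ :: l => a :: evensRR l

/-- Elements at odd positions of a list. -/
def oddsRR {α : Type*} (l : List α) : List α := evensRR l.tail

lemma evensRR_cons {α : Type*} (a : α) (l : List α) : evensRR (a :: l) = a :: evensRR l.tail := by
  cases l <;> rfl

lemma evensRR_sublist {α : Type*} : ∀ l : List α, (evensRR l).Sublist l
  | [] => List.Sublist.refl _
  | [a] => List.Sublist.refl _
  | a :: b :: l => by
      simpa [evensRR] using List.Sublist.cons₂ a ((evensRR_sublist l).trans (List.sublist_cons_self b l))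

lemma oddsRR_sublist {α : Type*} (l : List α) : (oddsRR l).Sublist l :=
  (evensRR_sublist l.tail).trans (List.tail_sublist l)

lemma enumFrom_filter_even {α : Type*} (L : List α) : ∀ k : ℕ,
    ((((L.zipIdx k).map Prod.swap).filter (fun q => q.1 % 2 = 0)).map Prod.snd) =
      if k % 2 = 0 then evensRR L else oddsRR L := by
  induction L with
  | nil => intro k; simp [evensRR, oddsRR]
  | cons a l ih =>
      intro k
      rcases Nat.even_or_odd k with hk | hk
      · have h0 : k % 2 = 0 := Nat.even_iff.mp hk
        have h1 : (k + 1) % 2 = 1 := by omega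
        simp [List.zipIdx_cons, List.filter_cons, h0, ih (k + 1), h1, evensRR_cons, oddsRR]
      · have h0 : k % 2 = 1 := Nat.odd_iff.mp hk
        have h1 : (k + 1) % 2 = 0 := by omega
        simp [List.zipIdx_cons, List.filter_cons, h0, ih (k + 1), h1, oddsRR]

lemma enumFrom_filter_odd {α : Type*} (L : List α) : ∀ k : ℕ,
    ((((L.zipIdx k).map Prod.swap).filter (fun q => q.1 % 2 = 1)).map Prod.snd) =
      if k % 2 = 0 then oddsRR L else evensRR L := by
  induction L with
  | nil => intro k; simp [evensRR, oddsRR]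
  | cons a l ih =>
      intro k
      rcases Nat.even_or_odd k with hk | hk
      · have h0 : k % 2 = 0 := Nat.even_iff.mp hk
        have h1 : (k + 1) % 2 = 1 := by omega
        simp [List.zipIdx_cons, List.filter_cons, h0, ih (k + 1), h1, oddsRR]
      · have h0 : k % 2 = 1 := Nat.odd_iff.mp hk
        have h1 : (k + 1) % 2 = 0 := by omega
        simp [List.zipIdx_cons, List.filter_cons, h0, ih (k + 1), h1, evensRR_cons, oddsRR]

lemma evensRR_le {α : Type*} (vi : α → ℝ) (hvi0 : ∀ e, 0 ≤ vi e) :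
    ∀ L : List α,
      (∀ (t : ℕ) (ht : t < L.length), t % 2 = 1 → ∀ e ∈ L.drop t, vi e ≤ vi (L.get ⟨t, ht⟩)) →
      ∀ c : ℝ, 0 ≤ c → (∀ e ∈ L, vi e ≤ c) →
      ((evensRR L).map vi).sum ≤ c + ((oddsRR L).map vi).sum
  | [], _, c, hc0, _ => by simpa [evensRR, oddsRR] using hc0
  | [a], _, c, _, hc => by
      simpa [evensRR, oddsRR] using hc a (by simp)
  | a :: b :: M, hpick, c, hc0, hc => by
      have hM : ∀ (t : ℕ) (ht : t < M.length), t % 2 = 1 →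
          ∀ e ∈ M.drop t, vi e ≤ vi (M.get ⟨t, ht⟩) := by
        intro t ht h1 e he
        have ht2 : t + 2 < (a :: b :: M).length := by simpa using Nat.add_lt_add_right ht 2
        have := hpick (t + 2) ht2 (by omega) e (by simpa using he)
        simpa using this
      have hb : ∀ e ∈ M, vi e ≤ vi b := by
        intro e he
        have h1 : (1 : ℕ) < (a :: b :: M).length := by simp
        have := hpick 1 h1 rfl e (by simp [he])
        simpa using this
      have ih := evensRR_le vi hvi0 M hM (vi b) (hvi0 b) hb
      have ha : vi a ≤ c := hc a (by simp)
      have : ((evensRR (a :: b :: M)).map vi).sum = vi a + ((evensRR M).map vi).sum := by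
        simp [evensRR]
      have hodds : ((oddsRR (a :: b :: M)).map vi).sum = vi b + ((oddsRR M).map vi).sum := by
        simp [oddsRR, evensRR_cons]
      rw [this, hodds]
      linarith

/-- In round robin with additive valuations, each item valued at most 1,
where `j` picks first: if assigning `B_j` to `j` and `B_i` to `i` is not
locally envy-freeable, i.e. `v_i(B_j) + v_j(B_i) > v_i(B_i) + v_j(B_j)`,
then `v_j(B_j) - v_j(B_i) ≤ 1`. -/
theorem stmt5 {α : Type*} [DecidableEq α] (vj vi : α → ℝ)
    (hvj : ∀ e, 0 ≤ vj e) (hvi : ∀ e, 0 ≤ vi e)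
    (hvj1 : ∀ e, vj e ≤ 1) (hvi1 : ∀ e, vi e ≤ 1)
    (S Bj Bi : Finset α) (h : IsRoundRobin vj vi S Bj Bi)
    (hnotEFable : ∑ e ∈ Bi, vi e + ∑ e ∈ Bj, vj e <
      ∑ e ∈ Bj, vi e + ∑ e ∈ Bi, vj e) :
    ∑ e ∈ Bj, vj e - ∑ e ∈ Bi, vj e ≤ 1 := by
  obtain ⟨L, hnd, -, hpick, hBj, hBi⟩ := h
  have henum : L.zipIdx = L.zipIdx 0 := rfl
  have hBj' : Bj = (evensRR L).toFinset := by
    rw [hBj, henum, enumFrom_filter_even]; simp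
  have hBi' : Bi = (oddsRR L).toFinset := by
    rw [hBi, henum, enumFrom_filter_odd]; simp
  have hndE : (evensRR L).Nodup := (evensRR_sublist L).nodup hnd
  have hndO : (oddsRR L).Nodup := (oddsRR_sublist L).nodup hnd
  have hSj : ∑ e ∈ Bj, vi e = ((evensRR L).map vi).sum := by
    rw [hBj']; exact List.sum_toFinset vi hndE
  have hSi : ∑ e ∈ Bi, vi e = ((oddsRR L).map vi).sum := by
    rw [hBi']; exact List.sum_toFinset vi hndO
  have key : ((evensRR L).map vi).sum ≤ 1 + ((oddsRR L).map vi).sum := by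
    refine evensRR_le vi hvi L ?_ 1 zero_le_one (fun e _ => hvi1 e)
    intro t ht h1 e he
    have := hpick t ht e he
    rwa [if_neg (by omega)] at this
  rw [hSj, hSi] at hnotEFable
  linarith
end

section
/- Consider the simple graph instance on n ≥ 3 vertices consisting of one isolated edge {1,2} (valued 1 by both endpoints) together with a complete graph on vertices {3,...,n}, where each agent i ∈ {3,...,n} values a set S of her incident edges at 1 if |S| = n−2 (i.e., she receives all edges incident to her) and 0 otherwise. Then every envy-free orientation with payments of this instance requires total subsidy at least n−2. -/
open Sym2

/-- Lower-bound instance for simple graphs with monotone valuations, on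
`n + 3` agents (so the number of agents is at least 3): one isolated edge
`{0, 1}` valued 1 by both endpoints, together with a complete graph on the
agents `{2, …, n+2}` where each such agent values a set of her incident edges
at 1 iff it contains all edges incident to her, and 0 otherwise.  Every
envy-free orientation with payments requires total subsidy at least
`(n+3) - 2`. -/
theorem stmt9 (n : ℕ)
    (EdgeP : Sym2 (Fin (n + 3)) → Prop)
    (hEdgeP : ∀ e, EdgeP e ↔
      (e = s((0 : Fin (n + 3)), (1 : Fin (n + 3))) ∨
        (¬ e.IsDiag ∧ ∀ a ∈ e, 2 ≤ (a : ℕ))))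
    (v : Fin (n + 3) → Finset (Sym2 (Fin (n + 3))) → ℝ)
    (hv01 : ∀ i : Fin (n + 3), (i : ℕ) ≤ 1 → ∀ S,
      v i S = if s((0 : Fin (n + 3)), (1 : Fin (n + 3))) ∈ S then 1 else 0)
    (hvclique : ∀ i : Fin (n + 3), 2 ≤ (i : ℕ) → ∀ S,
      v i S = if (∀ j : Fin (n + 3), 2 ≤ (j : ℕ) → j ≠ i → s(i, j) ∈ S)
        then 1 else 0)
    (A : Fin (n + 3) → Finset (Sym2 (Fin (n + 3))))
    (hA : ∀ i, ∀ e ∈ A i, EdgeP e ∧ i ∈ e)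
    (hApart : ∀ e, EdgeP e → ∃! i, e ∈ A i)
    (p : Fin (n + 3) → ℝ) (hp : ∀ i, 0 ≤ p i)
    (hEF : ∀ i j, v i (A j) + p j ≤ v i (A i) + p i) :
    ((n : ℝ) + 3) - 2 ≤ ∑ i, p i := by
  classical
  set e0 : Sym2 (Fin (n + 3)) := s((0 : Fin (n + 3)), (1 : Fin (n + 3))) with he0
  have hE0 : EdgeP e0 := (hEdgeP e0).2 (Or.inl rfl)
  obtain ⟨a, ha, huniq⟩ := hApart e0 hE0
  have hamem : a ∈ e0 := (hA a e0 ha).2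
  have hav : (a : ℕ) ≤ 1 := by
    rcases Sym2.mem_iff.mp hamem with h | h <;> subst h <;> simp [Fin.val_one]
  set b : Fin (n + 3) := if a = 0 then 1 else 0 with hb
  have hbv : (b : ℕ) ≤ 1 := by
    rw [hb]; split <;> simp [Fin.val_one]
  have hne : b ≠ a := by
    rw [hb]
    by_cases h : a = 0
    · rw [if_pos h, h]
      exact Fin.ne_of_val_ne (by simp [Fin.val_one])
    · rw [if_neg h]
      exact fun hc => h hc.symm
  have he0nb : e0 ∉ A b := fun h => hne (huniq b h)
  have hpb : 1 + p a ≤ p b := by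
    have := hEF b a
    rw [hv01 b hbv (A a), hv01 b hbv (A b), if_pos ha, if_neg he0nb] at this
    linarith
  -- clique sets
  set Sat : Finset (Fin (n + 3)) := Finset.univ.filter
    (fun i => 2 ≤ (i : ℕ) ∧ ∀ j : Fin (n + 3), 2 ≤ (j : ℕ) → j ≠ i → s(i, j) ∈ A i)
    with hSat
  set S : Finset (Fin (n + 3)) := Finset.univ.filter (fun i => 2 ≤ (i : ℕ)) with hS
  have hSatS : Sat ⊆ S := by
    intro i hi
    simp only [hSat, hS, Finset.mem_filter, Finset.mem_univ, true_and] at hi ⊢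
    exact hi.1
  have hScard : S.card = n + 1 := by
    have : S = Finset.univ \ {(0 : Fin (n + 3)), 1} := by
      ext i
      simp only [hS, Finset.mem_filter, Finset.mem_univ, true_and, Finset.mem_sdiff,
        Finset.mem_insert, Finset.mem_singleton]
      constructor
      · intro h
        push_neg
        constructor
        · intro hc; rw [hc] at h; simp at h
        · intro hc; rw [hc] at h; simp [Fin.val_one] at h
      · intro h
        push_neg at h
        obtain ⟨h0, h1⟩ := h
        have c0 : (i : ℕ) ≠ 0 := fun hc => h0 (Fin.ext (by simp [hc]))
        have c1 : (i : ℕ) ≠ 1 := fun hc => h1 (Fin.ext (by simp [hc, Fin.val_one]))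
        omega
    rw [this, Finset.card_sdiff_of_subset (by intro x _; exact Finset.mem_univ x)]
    have h01 : ((0 : Fin (n + 3)) : ℕ) ≠ ((1 : Fin (n + 3)) : ℕ) := by
      simp [Fin.val_one]
    rw [Finset.card_insert_of_notMem (by simp [Fin.ne_of_val_ne h01])]
    simp
  have hSatcard : Sat.card ≤ 1 := by
    rw [Finset.card_le_one]
    intro i hi j hj
    by_contra hij
    simp only [hSat, Finset.mem_filter, Finset.mem_univ, true_and] at hi hj
    have hij' : j ≠ i := fun h => hij (h ▸ rfl)
    have h1 : s(i, j) ∈ A i := hi.2 j hj.1 hij'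
    have h2 : s(i, j) ∈ A j := by
      have := hj.2 i hi.1 (fun h => hij h)
      rwa [Sym2.eq_swap] at this
    have hE : EdgeP s(i, j) := by
      refine (hEdgeP _).2 (Or.inr ⟨?_, ?_⟩)
      · simp [Sym2.isDiag_iff_proj_eq]
        exact fun h => hij h
      · intro x hx
        rcases Sym2.mem_iff.mp hx with rfl | rfl
        · exact hi.1
        · exact hj.1
    obtain ⟨c, -, hu⟩ := hApart _ hE
    exact hij ((hu i h1).trans (hu j h2).symm)
  set U : Finset (Fin (n + 3)) := S \ Sat with hU
  have hUcard : n ≤ U.card := by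
    rw [hU, Finset.card_sdiff_of_subset hSatS, hScard]
    omega
  have hUp : ∀ i ∈ U, 1 ≤ p i := by
    intro i hi
    simp only [hU, hS, hSat, Finset.mem_sdiff, Finset.mem_filter, Finset.mem_univ,
      true_and] at hi
    obtain ⟨hi2, hnf⟩ := hi
    have hnf' : ¬ ∀ j : Fin (n + 3), 2 ≤ (j : ℕ) → j ≠ i → s(i, j) ∈ A i :=
      fun h => hnf ⟨hi2, h⟩
    have hvii : v i (A i) = 0 := by
      rw [hvclique i hi2 (A i), if_neg hnf']
    push_neg at hnf'
    obtain ⟨j, hj2, hji, -⟩ := hnf'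
    have hvib : v i (A b) = 0 := by
      rw [hvclique i hi2 (A b), if_neg]
      intro h
      obtain ⟨-, hbmem⟩ := hA b _ (h j hj2 hji)
      rcases Sym2.mem_iff.mp hbmem with h' | h' <;>
        · have : ((b : Fin (n + 3)) : ℕ) = _ := congrArg Fin.val h'
          omega
    have hef := hEF i b
    rw [hvii, hvib] at hef
    have := hp a
    linarith
  have hbU : b ∉ U := by
    intro h
    simp only [hU, hS, Finset.mem_sdiff, Finset.mem_filter, Finset.mem_univ,
      true_and] at h
    omega
  have hsum1 : ∑ i ∈ insert b U, p i ≤ ∑ i, p i :=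
    Finset.sum_le_sum_of_subset_of_nonneg (Finset.subset_univ _) (fun i _ _ => hp i)
  rw [Finset.sum_insert hbU] at hsum1
  have hsum2 : (U.card : ℝ) * 1 ≤ ∑ i ∈ U, p i := by
    have := Finset.card_nsmul_le_sum U p 1 hUp
    simpa [nsmul_eq_mul] using this
  have hcast : (n : ℝ) ≤ (U.card : ℝ) := by exact_mod_cast hUcard
  have := hp a
  linarith
end

section
/- Consider the multigraph instance on n agents (n even) consisting of n/2 disjoint pairs of agents, each pair connected by a single edge valued 1 by both endpoints. Then every envy-free orientation with payments requires total subsidy at least n/2, and total subsidy exactly n/2 suffices. -/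
lemma pair_sum10 (f : ℕ → ℝ) (m : ℕ) :
    ∑ i ∈ Finset.range (2 * m), f i
      = ∑ k ∈ Finset.range m, (f (2 * k) + f (2 * k + 1)) := by
  induction m with
  | zero => simp
  | succ n ih =>
      have : 2 * (n + 1) = 2 * n + 1 + 1 := by ring
      rw [this, Finset.sum_range_succ, Finset.sum_range_succ, ih,
        Finset.sum_range_succ]
      ring

/-- The instance with `n = 2*m` agents (`n` even) forming `m` disjoint pairs,
each pair `{2k, 2k+1}` connected by a single edge (item `k`) valued 1 by both
endpoints and 0 by everyone else.  Every envy-free orientation with payments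
needs total subsidy at least `n/2 = m`, and total subsidy exactly `m`
suffices. -/
theorem stmt10 (m : ℕ) (hm : 0 < m)
    (v : Fin (2 * m) → Finset (Fin m) → ℝ)
    (hv : ∀ (i : Fin (2 * m)) (S : Finset (Fin m)),
      v i S = if (⟨i.val / 2, by have := i.isLt; omega⟩ : Fin m) ∈ S
        then 1 else 0) :
    (∀ (A : Fin (2 * m) → Finset (Fin m)) (p : Fin (2 * m) → ℝ),
      (∀ k : Fin m, ∃! i, k ∈ A i) →
      (∀ (i : Fin (2 * m)) (k : Fin m), k ∈ A i →
        (i : ℕ) = 2 * k.val ∨ (i : ℕ) = 2 * k.val + 1) →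
      (∀ i, 0 ≤ p i) →
      (∀ i j, v i (A j) + p j ≤ v i (A i) + p i) →
      (m : ℝ) ≤ ∑ i, p i) ∧
    (∃ (A : Fin (2 * m) → Finset (Fin m)) (p : Fin (2 * m) → ℝ),
      (∀ k : Fin m, ∃! i, k ∈ A i) ∧
      (∀ (i : Fin (2 * m)) (k : Fin m), k ∈ A i →
        (i : ℕ) = 2 * k.val ∨ (i : ℕ) = 2 * k.val + 1) ∧
      (∀ i, 0 ≤ p i) ∧
      (∀ i j, v i (A j) + p j ≤ v i (A i) + p i) ∧
      ∑ i, p i = (m : ℝ)) := by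
  constructor
  · -- lower bound
    intro A p hA1 hA2 hp hEF
    set F : ℕ → ℝ := fun i => if h : i < 2 * m then p ⟨i, h⟩ else 0 with hF
    have hsum : ∑ i, p i = ∑ i ∈ Finset.range (2 * m), F i := by
      rw [← Fin.sum_univ_eq_sum_range]
      apply Finset.sum_congr rfl
      intro i _
      simp [hF, i.isLt]
    have key : ∀ k ∈ Finset.range m, (1 : ℝ) ≤ F (2 * k) + F (2 * k + 1) := by
      intro k hk
      rw [Finset.mem_range] at hk
      have h2k : 2 * k < 2 * m := by omega
      have h2k1 : 2 * k + 1 < 2 * m := by omega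
      obtain ⟨i, hi, huniq⟩ := hA1 ⟨k, hk⟩
      have hcase := hA2 i ⟨k, hk⟩ hi
      -- j is the other endpoint
      have main : ∀ j : Fin (2 * m), j ≠ i → (j : ℕ) / 2 = k → 1 ≤ p j := by
        intro j hji hjk
        have hvAi : v j (A i) = 1 := by
          rw [hv]
          have : (⟨(j : ℕ) / 2, by have := j.isLt; omega⟩ : Fin m) = ⟨k, hk⟩ := by
            simp [hjk]
          rw [if_pos (by rw [this]; exact hi)]
        have hvAj : v j (A j) = 0 := by
          rw [hv]
          have : (⟨(j : ℕ) / 2, by have := j.isLt; omega⟩ : Fin m) = ⟨k, hk⟩ := by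
            simp [hjk]
          rw [this, if_neg]
          intro hmem
          exact hji (huniq j hmem)
        have := hEF j i
        rw [hvAi, hvAj] at this
        have := hp i
        linarith
      rcases hcase with h | h
      · -- i = 2k, loser is 2k+1
        have hji : (⟨2 * k + 1, h2k1⟩ : Fin (2 * m)) ≠ i := by
          intro he
          have : ((⟨2 * k + 1, h2k1⟩ : Fin (2 * m)) : ℕ) = (i : ℕ) := by rw [he]
          simp [h] at this
        have := main ⟨2 * k + 1, h2k1⟩ hji (by simp; omega)
        have h0 : 0 ≤ F (2 * k) := by simp [hF, h2k]; exact hp _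
        have h1 : F (2 * k + 1) = p ⟨2 * k + 1, h2k1⟩ := by simp [hF, h2k1]
        rw [h1]; linarith
      · -- i = 2k+1, loser is 2k
        have hji : (⟨2 * k, h2k⟩ : Fin (2 * m)) ≠ i := by
          intro he
          have : ((⟨2 * k, h2k⟩ : Fin (2 * m)) : ℕ) = (i : ℕ) := by rw [he]
          simp [h] at this
        have := main ⟨2 * k, h2k⟩ hji (by simp)
        have h0 : 0 ≤ F (2 * k + 1) := by simp [hF, h2k1]; exact hp _
        have h1 : F (2 * k) = p ⟨2 * k, h2k⟩ := by simp [hF, h2k]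
        rw [h1]; linarith
    calc (m : ℝ) = ∑ _k ∈ Finset.range m, (1 : ℝ) := by simp
      _ ≤ ∑ k ∈ Finset.range m, (F (2 * k) + F (2 * k + 1)) :=
          Finset.sum_le_sum key
      _ = ∑ i ∈ Finset.range (2 * m), F i := (pair_sum10 F m).symm
      _ = ∑ i, p i := hsum.symm
  · -- upper bound
    refine ⟨fun i => if (i : ℕ) % 2 = 0 then {⟨(i : ℕ) / 2, by have := i.isLt; omega⟩} else ∅,
      fun i => if (i : ℕ) % 2 = 0 then 0 else 1, ?_, ?_, ?_, ?_, ?_⟩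
    · intro k
      refine ⟨⟨2 * k, by have := k.isLt; omega⟩, ?_, ?_⟩
      · simp
      · intro i hi
        by_cases he : (i : ℕ) % 2 = 0
        · simp [he] at hi
          have : (k : ℕ) = (i : ℕ) / 2 := by
            have := congrArg Fin.val hi; simpa using this
          apply Fin.ext
          simp; omega
        · simp [he] at hi
    · intro i k hi
      by_cases he : (i : ℕ) % 2 = 0
      · simp [he] at hi
        have : (k : ℕ) = (i : ℕ) / 2 := by
          have := congrArg Fin.val hi; simpa using this
        omega
      · simp [he] at hi
    · intro i
      by_cases he : (i : ℕ) % 2 = 0 <;> simp [he]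
    · intro i j
      rw [hv, hv]
      by_cases hi : (i : ℕ) % 2 = 0 <;> by_cases hj : (j : ℕ) % 2 = 0 <;>
        simp [hi, hj] <;> split_ifs <;> norm_num
    · have hsum : ∀ f : Fin (2 * m) → ℝ,
          ∑ i, f i = ∑ i ∈ Finset.range (2 * m),
            (fun n => if h : n < 2 * m then f ⟨n, h⟩ else 0) i := by
        intro f
        rw [← Fin.sum_univ_eq_sum_range]
        apply Finset.sum_congr rfl
        intro i _
        simp [i.isLt]
      rw [hsum, pair_sum10]
      have : ∀ k ∈ Finset.range m,
          ((fun n => if h : n < 2 * m then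
              (if (((⟨n, h⟩ : Fin (2 * m)) : ℕ)) % 2 = 0 then (0:ℝ) else 1) else 0) (2 * k)
            + (fun n => if h : n < 2 * m then
              (if (((⟨n, h⟩ : Fin (2 * m)) : ℕ)) % 2 = 0 then (0:ℝ) else 1) else 0) (2 * k + 1))
            = 1 := by
        intro k hk
        rw [Finset.mem_range] at hk
        have h2k : 2 * k < 2 * m := by omega
        have h2k1 : 2 * k + 1 < 2 * m := by omega
        simp [h2k, h2k1, Nat.mul_mod_right]
      rw [Finset.sum_congr rfl this]
      simp
end

section
/- Let agents 1,...,h be arranged in a cycle (indices mod h) and suppose each agent i is allocated a bundle A_i such that for each i, agent i envies agent i+1 (v_i(A_i) < v_i(P_{i+1}) where P_{i+1} ⊆ A_{i+1} is the sub-bundle relevant to i), and suppose for each i there are thresholds b_i with v_i(P_{i+1}) − b_i ≤ v_{i+1}(P_{i+1}) − b_{i+1}. Then summing these inequalities yields a contradiction with monotonicity: it cannot hold that v_i(A_i) < v_i(P_{i+1}) and v_i(P_{i+1}) − v_{i+1}(P_{i+1}) ≤ b_i − b_{i+1} simultaneously for all i in the cycle. -/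
/-- Agents `0, …, h-1` arranged in a cycle (indices mod `h`), with monotone
valuations, bundles `A i`, sub-bundles `P i ⊆ A i`, and thresholds `b i`.  It
is impossible that simultaneously, for every `i`, agent `i` envies `i+1`
(`v i (A i) < v i (P (i+1))`) and
`v i (P (i + 1)) - b i ≤ v (i+1) (P (i+1)) - b (i+1)`. -/
theorem stmt13 {M : Type*} {h : ℕ} [NeZero h]
    (v : Fin h → Finset M → ℝ)
    (hmono : ∀ i, ∀ S T : Finset M, S ⊆ T → v i S ≤ v i T)
    (A P : Fin h → Finset M)
    (hP : ∀ i, P i ⊆ A i)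
    (b : Fin h → ℝ)
    (henvy : ∀ i : Fin h, v i (A i) < v i (P (i + 1)))
    (hthresh : ∀ i : Fin h,
      v i (P (i + 1)) - b i ≤ v (i + 1) (P (i + 1)) - b (i + 1)) :
    False := by
  have key : ∀ i : Fin h, v i (A i) + b (i + 1) < v (i + 1) (A (i + 1)) + b i := by
    intro i
    have h1 := henvy i
    have h2 := hthresh i
    have h3 := hmono (i + 1) (P (i + 1)) (A (i + 1)) (hP (i + 1))
    linarith
  have hne : (Finset.univ : Finset (Fin h)).Nonempty :=
    Finset.univ_nonempty
  have hsum := Finset.sum_lt_sum_of_nonempty hne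
    (f := fun i => v i (A i) + b (i + 1))
    (g := fun i => v (i + 1) (A (i + 1)) + b i) (fun i _ => key i)
  have hshift : ∑ i : Fin h, (v (i + 1) (A (i + 1)) + b i)
      = ∑ i : Fin h, (v i (A i) + b (i + 1)) := by
    rw [Finset.sum_add_distrib, Finset.sum_add_distrib]
    congr 1
    exact Fintype.sum_equiv (Equiv.addRight (1 : Fin h))
      (fun i => v (i + 1) (A (i + 1))) (fun i => v i (A i)) (fun i => rfl)
    exact Fintype.sum_equiv (Equiv.subRight (1 : Fin h))
      (fun i => b i) (fun i => b (i + 1)) (fun i => by simp)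
  rw [hshift] at hsum
  exact lt_irrefl _ hsum
end

section
/- Let G be a connected multigraph with binary additive valuations where every edge is critical (valued 1 by both endpoints). Suppose G contains a simple cycle of length at least 3. Then G admits an envy-free orientation (with zero subsidy). -/
open Sym2 Finset

section aux

/-- Counting lemma: picking the even-indexed elements of a finite linearly
ordered set yields `⌈n/2⌉` elements. -/
lemma card_even_idx {α : Type*} [LinearOrder α] (s : Finset α) :
    (s.filter fun e => Even ((s.filter (· < e)).card)).card = (s.card + 1) / 2 := by
  classical
  induction s using Finset.induction_on_max with
  | empty => simp
  | insert a s' ha ih =>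
    have has' : a ∉ s' := fun h => absurd (ha a h) (lt_irrefl a)
    have h1 : (insert a s').filter (· < a) = s' := by
      ext x
      simp only [mem_filter, mem_insert]
      constructor
      · rintro ⟨rfl | h, hlt⟩
        · exact absurd hlt (lt_irrefl _)
        · exact h
      · intro hx; exact ⟨Or.inr hx, ha x hx⟩
    have h2 : ∀ e ∈ s', (insert a s').filter (· < e) = s'.filter (· < e) := by
      intro e he
      ext x
      simp only [mem_filter, mem_insert]
      constructor
      · rintro ⟨rfl | h, hlt⟩
        · exact absurd (hlt.trans (ha e he)) (lt_irrefl _)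
        · exact ⟨h, hlt⟩
      · rintro ⟨hx, hlt⟩; exact ⟨Or.inr hx, hlt⟩
    have h3 : s'.filter (fun e => Even (((insert a s').filter (· < e)).card)) =
        s'.filter (fun e => Even ((s'.filter (· < e)).card)) := by
      apply filter_congr
      intro e he
      rw [h2 e he]
    rw [filter_insert, h1]
    by_cases hpa : Even s'.card
    · rw [if_pos hpa, card_insert_of_notMem (fun h => has' (mem_filter.mp h).1), h3, ih,
        card_insert_of_notMem has']
      obtain ⟨m, hm⟩ := hpa
      omega
    · rw [if_neg hpa, h3, ih, card_insert_of_notMem has']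
      obtain ⟨m, hm⟩ := Nat.not_even_iff_odd.mp hpa
      omega

variable {V E : Type*} [Fintype V] [Fintype E] [DecidableEq V] [DecidableEq E]

/-- The "head" of a pair `P`: the vertex that gets the larger half of the
non-special edges with endpoints `P`.  If some vertex `y ∈ P` has its special
edge `f y` inside the pair `P`, the head is the *other* endpoint. -/
noncomputable def hdv (ep : E → Sym2 V) (f : V → E) (P : Sym2 V) : V :=
  if h : ∃ y, ep (f y) = P ∧ y ∈ P then Sym2.Mem.other h.choose_spec.2 else P.out.1

lemma hdv_mem (ep : E → Sym2 V) (f : V → E) (P : Sym2 V) : hdv ep f P ∈ P := by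
  unfold hdv
  split
  · exact Sym2.other_mem _
  · exact Sym2.out_fst_mem P

/-- The other endpoint of the pair `P`. -/
noncomputable def tlv (ep : E → Sym2 V) (f : V → E) (P : Sym2 V) : V :=
  Sym2.Mem.other (hdv_mem ep f P)

lemma tlv_mem (ep : E → Sym2 V) (f : V → E) (P : Sym2 V) : tlv ep f P ∈ P :=
  Sym2.other_mem _

lemma tlv_ne (ep : E → Sym2 V) (f : V → E) {P : Sym2 V} (h : ¬ P.IsDiag) :
    tlv ep f P ≠ hdv ep f P :=
  Sym2.other_ne h _

lemma hdv_ne (ep : E → Sym2 V) (f : V → E) (hinj : Function.Injective (ep ∘ f))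
    {P : Sym2 V} (hd : ¬ P.IsDiag) {j : V} (hj : j ∈ P) (hje : ep (f j) = P) :
    hdv ep f P ≠ j := by
  have h : ∃ y, ep (f y) = P ∧ y ∈ P := ⟨j, hje, hj⟩
  have hc : h.choose = j := hinj (show ep (f h.choose) = ep (f j) by
    rw [h.choose_spec.1, hje])
  unfold hdv
  rw [dif_pos h]
  exact fun he => (Sym2.other_ne hd h.choose_spec.2) (he.trans hc.symm)

/-- The non-special edges with endpoint pair `P`. -/
def RP (ep : E → Sym2 V) (f : V → E) (P : Sym2 V) : Finset E :=
  Finset.univ.filter (fun e => ep e = P ∧ ∀ i, f i ≠ e)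

lemma mem_RP (ep : E → Sym2 V) (f : V → E) (P : Sym2 V) (e : E) :
    e ∈ RP ep f P ↔ ep e = P ∧ ∀ i, f i ≠ e := by
  simp [RP]

/-- The orientation: special edges `f i` go to `i`; other edges are split
as evenly as possible within each parallel class, with the head getting the
larger half. -/
noncomputable def ori [LinearOrder E] (ep : E → Sym2 V) (f : V → E) (e : E) : V :=
  if h : ∃ i, f i = e then h.choose
  else if Even (((RP ep f (ep e)).filter (· < e)).card) then hdv ep f (ep e)
    else tlv ep f (ep e)

lemma ori_mem [LinearOrder E] (ep : E → Sym2 V) (f : V → E)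
    (hmem : ∀ i, i ∈ ep (f i)) (e : E) : ori ep f e ∈ ep e := by
  unfold ori
  split
  · next h =>
      have h2 := hmem h.choose
      rwa [h.choose_spec] at h2
  · split
    · exact hdv_mem ep f (ep e)
    · exact tlv_mem ep f (ep e)

lemma ori_f [LinearOrder E] (ep : E → Sym2 V) (f : V → E)
    (hfinj : Function.Injective f) (i : V) : ori ep f (f i) = i := by
  unfold ori
  rw [dif_pos ⟨i, rfl⟩]
  exact hfinj (Exists.choose_spec (⟨i, rfl⟩ : ∃ i', f i' = f i))

lemma ori_nonspecial [LinearOrder E] (ep : E → Sym2 V) (f : V → E) (e : E)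
    (hns : ∀ i, f i ≠ e) :
    ori ep f e = if Even (((RP ep f (ep e)).filter (· < e)).card) then hdv ep f (ep e)
      else tlv ep f (ep e) := by
  unfold ori
  rw [dif_neg (by push_neg; exact hns)]

lemma filter_ori_hd [LinearOrder E] (ep : E → Sym2 V) (f : V → E) (P : Sym2 V)
    (hne : tlv ep f P ≠ hdv ep f P) :
    (RP ep f P).filter (fun e => ori ep f e = hdv ep f P) =
      (RP ep f P).filter (fun e => Even (((RP ep f P).filter (· < e)).card)) := by
  apply filter_congr
  intro e he
  rw [mem_RP] at he
  rw [ori_nonspecial ep f e he.2, he.1]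
  by_cases hev : Even (((RP ep f P).filter (· < e)).card)
  · simp [hev]
  · simp [hev, hne]

lemma card_ori_hd [LinearOrder E] (ep : E → Sym2 V) (f : V → E) (P : Sym2 V)
    (hne : tlv ep f P ≠ hdv ep f P) :
    ((RP ep f P).filter (fun e => ori ep f e = hdv ep f P)).card =
      ((RP ep f P).card + 1) / 2 := by
  rw [filter_ori_hd ep f P hne, card_even_idx]

lemma card_ori_tl [LinearOrder E] (ep : E → Sym2 V) (f : V → E) (P : Sym2 V)
    (hne : tlv ep f P ≠ hdv ep f P) :
    ((RP ep f P).filter (fun e => ori ep f e = tlv ep f P)).card =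
      (RP ep f P).card / 2 := by
  classical
  have h1 : (RP ep f P).filter (fun e => ori ep f e = tlv ep f P) =
      (RP ep f P).filter (fun e => ¬ Even (((RP ep f P).filter (· < e)).card)) := by
    apply filter_congr
    intro e he
    rw [mem_RP] at he
    rw [ori_nonspecial ep f e he.2, he.1]
    by_cases hev : Even (((RP ep f P).filter (· < e)).card)
    · simp [hev, Ne.symm hne]
    · simp [hev]
  have h2 := Finset.card_filter_add_card_filter_not
    (s := RP ep f P) (p := fun e => Even (((RP ep f P).filter (· < e)).card))
  have h3 := card_even_idx (RP ep f P)
  rw [h1]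
  omega

/-- The core combinatorial lemma: given an injective (on endpoint pairs)
assignment of a distinct incident "special" edge to every vertex, an
envy-free orientation exists. -/
lemma key_lemma [LinearOrder E] (ep : E → Sym2 V) (f : V → E)
    (hmem : ∀ i, i ∈ ep (f i)) (hinj : Function.Injective (ep ∘ f)) :
    ∃ A : V → Finset E,
      (∀ i, ∀ e ∈ A i, i ∈ ep e) ∧
      (∀ e, ∃! i, e ∈ A i) ∧
      (∀ i j : V, (((A j).filter (fun e => i ∈ ep e)).card : ℝ) ≤
        (((A i).filter (fun e => i ∈ ep e)).card : ℝ)) := by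
  classical
  have hfinj : Function.Injective f := fun a b h => hinj (congrArg ep h)
  set o : E → V := ori ep f with ho
  have homem : ∀ e, o e ∈ ep e := ori_mem ep f hmem
  refine ⟨fun i => Finset.univ.filter (fun e => o e = i), ?_, ?_, ?_⟩
  · intro i e he
    rw [mem_filter] at he
    rw [← he.2]
    exact homem e
  · intro e
    exact ⟨o e, by simp, fun y hy => ((mem_filter.mp hy).2).symm⟩
  · intro i j
    rcases eq_or_ne i j with rfl | hij
    · exact le_refl _
    have hAi : (Finset.univ.filter (fun e => o e = i)).filter (fun e => i ∈ ep e) =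
        Finset.univ.filter (fun e => o e = i) := by
      apply Finset.filter_true_of_mem
      intro e he
      rw [mem_filter] at he
      rw [← he.2]
      exact homem e
    set P : Sym2 V := s(i, j) with hP
    have hPd : ¬ P.IsDiag := by
      rw [hP, Sym2.mk_isDiag_iff]
      exact hij
    have hiP : i ∈ P := Sym2.mem_mk_left i j
    have hjP : j ∈ P := Sym2.mem_mk_right i j
    -- the envied bundle
    have hB : (Finset.univ.filter (fun e => o e = j)).filter (fun e => i ∈ ep e) =
        Finset.univ.filter (fun e => o e = j ∧ ep e = P) := by
      ext e
      simp only [mem_filter, mem_univ, true_and]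
      constructor
      · rintro ⟨hoj, hi⟩
        refine ⟨hoj, ?_⟩
        have hj : j ∈ ep e := hoj ▸ homem e
        exact (Sym2.mem_and_mem_iff hij).mp ⟨hi, hj⟩
      · rintro ⟨hoj, hep⟩
        exact ⟨hoj, hep ▸ hiP⟩
    set B : Finset E := Finset.univ.filter (fun e => o e = j ∧ ep e = P) with hBdef
    have hsplit := Finset.card_filter_add_card_filter_not
      (s := B) (p := fun e => ∀ y, f y ≠ e)
    -- non-special part of B
    have hBr : B.filter (fun e => ∀ y, f y ≠ e) =
        (RP ep f P).filter (fun e => o e = j) := by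
      ext e
      simp only [hBdef, mem_filter, mem_univ, true_and, mem_RP]
      tauto
    -- special part of B
    have hBs : B.filter (fun e => ¬ ∀ y, f y ≠ e) ⊆ {f j} := by
      intro e he
      rw [Finset.mem_filter, hBdef, Finset.mem_filter] at he
      obtain ⟨⟨-, hoj, hep⟩, hs⟩ := he
      push_neg at hs
      obtain ⟨y, hy⟩ := hs
      have : o e = y := by rw [← hy, ho, ori_f ep f hfinj]
      rw [Finset.mem_singleton, ← hy, this.symm.trans hoj]
    have hBscard : (B.filter (fun e => ¬ ∀ y, f y ≠ e)).card ≤ 1 := by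
      calc (B.filter (fun e => ¬ ∀ y, f y ≠ e)).card ≤ ({f j} : Finset E).card :=
            Finset.card_le_card hBs
        _ = 1 := Finset.card_singleton _
    -- lower bound on A i
    have hAiLB : ∀ x : V, x ∈ P →
        1 + ((RP ep f P).filter (fun e => o e = x)).card ≤
          (Finset.univ.filter (fun e => o e = x)).card := by
      intro x hx
      have hsub : insert (f x) ((RP ep f P).filter (fun e => o e = x)) ⊆
          Finset.univ.filter (fun e => o e = x) := by
        intro e he
        rw [Finset.mem_insert] at he
        rcases he with rfl | he
        · rw [mem_filter]
          exact ⟨mem_univ _, ori_f ep f hfinj x⟩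
        · rw [mem_filter] at he ⊢
          exact ⟨mem_univ _, he.2⟩
      have hnotmem : f x ∉ (RP ep f P).filter (fun e => o e = x) := by
        rw [mem_filter, mem_RP]
        rintro ⟨⟨-, hall⟩, -⟩
        exact hall x rfl
      calc 1 + ((RP ep f P).filter (fun e => o e = x)).card
          = (insert (f x) ((RP ep f P).filter (fun e => o e = x))).card := by
            rw [Finset.card_insert_of_notMem hnotmem]; omega
        _ ≤ (Finset.univ.filter (fun e => o e = x)).card := Finset.card_le_card hsub
    -- head/tail facts
    have hhd_mem := hdv_mem ep f P
    have htl_mem := tlv_mem ep f P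
    have htl_ne := tlv_ne ep f (P := P) hPd
    have hhd_or : hdv ep f P = i ∨ hdv ep f P = j := by
      have := hhd_mem
      rw [hP, Sym2.mem_iff] at this
      exact this
    have htl_or : tlv ep f P = i ∨ tlv ep f P = j := by
      have := htl_mem
      rw [hP, Sym2.mem_iff] at this
      exact this
    have hshd := card_ori_hd ep f P htl_ne
    have hstl := card_ori_tl ep f P htl_ne
    rw [hAi, hB]
    rw [Nat.cast_le]
    set r : ℕ := (RP ep f P).card with hr
    by_cases hfj : ep (f j) = P
    · -- the special edge of j lies in the pair; head is i
      have hhd_i : hdv ep f P = i := by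
        rcases hhd_or with h | h
        · exact h
        · exact absurd h (hdv_ne ep f hinj hPd hjP hfj)
      have htl_j : tlv ep f P = j := by
        rcases htl_or with h | h
        · exact absurd (h.trans hhd_i.symm) htl_ne
        · exact h
      have hsj : ((RP ep f P).filter (fun e => o e = j)).card = r / 2 := by
        rw [← htl_j]; exact hstl
      have hsi : ((RP ep f P).filter (fun e => o e = i)).card = (r + 1) / 2 := by
        rw [← hhd_i]; exact hshd
      have h1 := hAiLB i hiP
      rw [hsi] at h1
      have h2 : (B.filter (fun e => ∀ y, f y ≠ e)).card = r / 2 := by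
        rw [hBr, hsj]
      omega
    · -- no special edge of j in the pair
      have h2 : (B.filter (fun e => ¬ ∀ y, f y ≠ e)).card = 0 := by
        rw [Finset.card_eq_zero]
        rw [Finset.eq_empty_iff_forall_notMem]
        intro e he
        have := hBs he
        rw [Finset.mem_singleton] at this
        subst this
        rw [mem_filter, hBdef, mem_filter] at he
        exact hfj he.1.2.2
      rcases hhd_or with hhd_i | hhd_j
      · have htl_j : tlv ep f P = j := by
          rcases htl_or with h | h
          · exact absurd (h.trans hhd_i.symm) htl_ne
          · exact h
        have hsj : ((RP ep f P).filter (fun e => o e = j)).card = r / 2 := by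
          rw [← htl_j]; exact hstl
        have hsi : ((RP ep f P).filter (fun e => o e = i)).card = (r + 1) / 2 := by
          rw [← hhd_i]; exact hshd
        have h1 := hAiLB i hiP
        rw [hsi] at h1
        have h3 : (B.filter (fun e => ∀ y, f y ≠ e)).card = r / 2 := by
          rw [hBr, hsj]
        omega
      · have htl_i : tlv ep f P = i := by
          rcases htl_or with h | h
          · exact h
          · exact absurd (h.trans hhd_j.symm) htl_ne
        have hsj : ((RP ep f P).filter (fun e => o e = j)).card = (r + 1) / 2 := by
          rw [← hhd_j]; exact hshd
        have hsi : ((RP ep f P).filter (fun e => o e = i)).card = r / 2 := by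
          rw [← htl_i]; exact hstl
        have h1 := hAiLB i hiP
        rw [hsi] at h1
        have h3 : (B.filter (fun e => ∀ y, f y ≠ e)).card = (r + 1) / 2 := by
          rw [hBr, hsj]
        omega

/-- Construction of the special-edge assignment from connectivity plus a
simple cycle of length at least 3. -/
lemma exists_special (ep : E → Sym2 V)
    (hconn : (SimpleGraph.fromRel (fun a b => ∃ e, ep e = s(a, b))).Connected)
    (hcyc : ∃ (k : ℕ) (c : Fin (k + 3) → V), Function.Injective c ∧
      ∀ t : Fin (k + 3), ∃ e, ep e = s(c t, c (t + 1)))  :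
    ∃ f : V → E, (∀ i, i ∈ ep (f i)) ∧ Function.Injective (ep ∘ f) := by
  classical
  obtain ⟨k, c, hcinj, hce⟩ := hcyc
  set H : SimpleGraph V := SimpleGraph.fromRel (fun a b => ∃ e, ep e = s(a, b)) with hH
  have hpar : ∀ v : V, ¬ (∃ t, c t = v) →
      ∃ (w : V) (e : E), ep e = s(v, w) ∧ H.dist w (c 0) < H.dist v (c 0) := by
    intro v hv
    have hv0 : v ≠ c 0 := fun h => hv ⟨0, h.symm⟩
    obtain ⟨p, hp⟩ := (hconn.preconnected v (c 0)).exists_walk_length_eq_dist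
    cases p with
    | nil => exact absurd rfl hv0
    | @cons _ w _ hadj q =>
      rw [hH, SimpleGraph.fromRel_adj] at hadj
      obtain ⟨-, he⟩ := hadj
      have he' : ∃ e, ep e = s(v, w) := by
        rcases he with he | he
        · exact he
        · obtain ⟨e, hee⟩ := he
          exact ⟨e, hee.trans (Sym2.eq_swap)⟩
      obtain ⟨e, hee⟩ := he'
      refine ⟨w, e, hee, ?_⟩
      have hq : H.dist w (c 0) ≤ q.length := SimpleGraph.dist_le q
      rw [SimpleGraph.Walk.length_cons] at hp
      omega
  choose g hg using hce
  haveI : Nonempty E := ⟨g 0⟩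
  haveI : Nonempty V := ⟨c 0⟩
  choose! pw pe hpe hplt using hpar
  refine ⟨fun v => if h : ∃ t, c t = v then g (h.choose - 1) else pe v, ?_, ?_⟩
  · intro v
    beta_reduce
    by_cases h : ∃ t, c t = v
    · rw [dif_pos h, hg]
      have : h.choose - 1 + 1 = h.choose := sub_add_cancel _ _
      rw [this, h.choose_spec]
      exact Sym2.mem_mk_right _ _
    · rw [dif_neg h, hpe v h]
      exact Sym2.mem_mk_left _ _
  · intro u v huv
    simp only [Function.comp_apply] at huv
    by_cases hu : ∃ t, c t = u <;> by_cases hv : ∃ t, c t = v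
    · rw [dif_pos hu, dif_pos hv, hg, hg, sub_add_cancel, sub_add_cancel,
        hu.choose_spec, hv.choose_spec] at huv
      rw [Sym2.eq_iff] at huv
      rcases huv with ⟨-, h2⟩ | ⟨h1, h2⟩
      · exact h2
      · exfalso
        -- h1 : c (hu.choose - 1) = v, h2 : u = c (hv.choose - 1)
        have ha : hu.choose - 1 = hv.choose := hcinj (h1.trans hv.choose_spec.symm)
        have hb : hv.choose - 1 = hu.choose := hcinj ((hu.choose_spec.trans h2).symm)
        have h3 : hu.choose = hv.choose + 1 := by
          rw [← ha]; rw [sub_add_cancel]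
        have h4 : hv.choose = hu.choose + 1 := by
          rw [← hb]; rw [sub_add_cancel]
        have : hu.choose = hu.choose + 2 :=
          calc hu.choose = hv.choose + 1 := h3
            _ = (hu.choose + 1) + 1 := by rw [h4]
            _ = hu.choose + 2 := by rw [add_assoc]; congr 1
        have h20 : (2 : Fin (k + 3)) = 0 := left_eq_add.mp this
        simp [Fin.ext_iff] at h20
        rw [Nat.mod_eq_of_lt (show 2 < k + 3 by omega)] at h20
        omega
    · exfalso
      rw [dif_pos hu, dif_neg hv, hg, sub_add_cancel, hu.choose_spec] at huv
      have hvin : v ∈ s(c (hu.choose - 1), u) := by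
        rw [huv, hpe v hv]
        exact Sym2.mem_mk_left _ _
      rw [Sym2.mem_iff] at hvin
      rcases hvin with h | h
      · exact hv ⟨hu.choose - 1, h.symm⟩
      · exact hv ⟨hu.choose, hu.choose_spec.trans h.symm⟩
    · exfalso
      rw [dif_neg hu, dif_pos hv, hg, sub_add_cancel, hv.choose_spec] at huv
      have huin : u ∈ s(c (hv.choose - 1), v) := by
        rw [← huv, hpe u hu]
        exact Sym2.mem_mk_left _ _
      rw [Sym2.mem_iff] at huin
      rcases huin with h | h
      · exact hu ⟨hv.choose - 1, h.symm⟩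
      · exact hu ⟨hv.choose, hv.choose_spec.trans h.symm⟩
    · rw [dif_neg hu, dif_neg hv, hpe u hu, hpe v hv] at huv
      rw [Sym2.eq_iff] at huv
      rcases huv with ⟨h1, -⟩ | ⟨h1, h2⟩
      · exact h1
      · exfalso
        have hu' := hplt u hu
        have hv' := hplt v hv
        rw [h2] at hu'
        rw [← h1] at hv'
        omega

end aux

/-- A connected multigraph (edge `e` has endpoints `ep e`, no loops) with
binary additive valuations where every edge is critical (valued 1 by both
endpoints, so agent `i`'s value of a bundle is the number of its edges
incident to `i`): if it contains a simple cycle of length at least 3, then it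
admits an envy-free orientation (with zero subsidy). -/
theorem stmt14 {V E : Type*} [Fintype V] [Fintype E] [DecidableEq V] [DecidableEq E]
    (ep : E → Sym2 V)
    (hloop : ∀ e, ¬ (ep e).IsDiag)
    (hconn : (SimpleGraph.fromRel (fun a b => ∃ e, ep e = s(a, b))).Connected)
    (hcyc : ∃ (k : ℕ) (c : Fin (k + 3) → V), Function.Injective c ∧
      ∀ t : Fin (k + 3), ∃ e, ep e = s(c t, c (t + 1))) :
    ∃ A : V → Finset E,
      (∀ i, ∀ e ∈ A i, i ∈ ep e) ∧
      (∀ e, ∃! i, e ∈ A i) ∧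
      (∀ i j : V, (((A j).filter (fun e => i ∈ ep e)).card : ℝ) ≤
        (((A i).filter (fun e => i ∈ ep e)).card : ℝ)) := by
  letI : LinearOrder E := LinearOrder.lift' (Fintype.equivFin E) (Fintype.equivFin E).injective
  obtain ⟨f, hmem, hinj⟩ := exists_special ep hconn hcyc
  exact key_lemma ep f hmem hinj
end

section
/- Let G be a connected multigraph with binary additive valuations where every edge is critical (valued 1 by both endpoints). If for every pair of adjacent vertices i, j the number of edges between i and j is odd, every vertex shares more than one edge with at most one neighbor, and G contains no simple cycle of length at least 3, then G admits no envy-free orientation; however, an envy-free orientation with payments exists using total subsidy exactly 1. -/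
open Sym2

set_option linter.unusedSectionVars false

open Classical in
lemma seq_cycle {V : Type*} [Finite V] (R : V → V → Prop) (x : ℕ → V)
    (hstep : ∀ n, R (x n) (x (n + 1)))
    (h1 : ∀ n, x n ≠ x (n + 1)) (h2 : ∀ n, x n ≠ x (n + 2)) :
    ∃ (k : ℕ) (c : Fin (k + 3) → V), Function.Injective c ∧
      ∀ t : Fin (k + 3), R (c t) (c (t + 1)) := by
  have hP : ∃ d, 0 < d ∧ ∃ a, x (a + d) = x a := by
    obtain ⟨a, b, hne, heq⟩ := Finite.exists_ne_map_eq_of_infinite x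
    rcases hne.lt_or_gt with h | h
    · exact ⟨b - a, by omega, a, by rw [show a + (b - a) = b by omega, heq]⟩
    · exact ⟨a - b, by omega, b, by rw [show b + (a - b) = a by omega, ← heq]⟩
  set d := Nat.find hP with hd
  obtain ⟨hdpos, a, ha⟩ : 0 < d ∧ ∃ a, x (a + d) = x a := Nat.find_spec hP
  have hmin : ∀ d', d' < d → ¬(0 < d' ∧ ∃ a, x (a + d') = x a) := fun d' h => Nat.find_min hP h
  have hd3 : 3 ≤ d := by
    rcases (by omega : d = 1 ∨ d = 2 ∨ 3 ≤ d) with h | h | h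
    · rw [h] at ha; exact absurd ha (h1 a).symm
    · rw [h] at ha; exact absurd ha (h2 a).symm
    · exact h
  refine ⟨d - 3, fun t => x (a + t.val), ?_, ?_⟩
  · intro t t' heq
    simp only at heq
    by_contra hne
    have hvne : t.val ≠ t'.val := fun h => hne (Fin.ext h)
    have htlt : t.val < d - 3 + 3 := t.isLt
    have ht'lt : t'.val < d - 3 + 3 := t'.isLt
    rcases hvne.lt_or_gt with h | h
    · exact hmin (t'.val - t.val) (by omega)
        ⟨by omega, a + t.val, by rw [show a + t.val + (t'.val - t.val) = a + t'.val by omega, heq]⟩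
    · exact hmin (t.val - t'.val) (by omega)
        ⟨by omega, a + t'.val, by rw [show a + t'.val + (t.val - t'.val) = a + t.val by omega, ← heq]⟩
  · intro t
    simp only
    by_cases hlast : t.val + 1 < d - 3 + 3
    · have : (t + 1).val = t.val + 1 := by
        rw [Fin.add_def]
        simp [Nat.mod_eq_of_lt hlast]
      rw [this, show a + (t.val + 1) = a + t.val + 1 by omega]
      exact hstep _
    · have htv : t.val = d - 3 + 2 := by have := t.isLt; omega
      have : (t + 1).val = 0 := by
        rw [Fin.add_def]
        simp [htv]
      rw [this, htv]
      have := hstep (a + (d - 3 + 2))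
      rw [show a + (d - 3 + 2) + 1 = a + d by omega, ha] at this
      simpa using this

section Aux
variable {V E : Type*} [Fintype V] [Fintype E] [DecidableEq V] [DecidableEq E]

/-- bundle of edges between `i` and `j` -/
private def bnd (ep : E → Sym2 V) (i j : V) : Finset E :=
  Finset.univ.filter (fun e => ep e = s(i, j))

private lemma bnd_symm (ep : E → Sym2 V) (i j : V) : bnd ep i j = bnd ep j i := by
  unfold bnd
  apply Finset.filter_congr
  intro e _
  rw [Sym2.eq_swap]

private lemma mem_bnd {ep : E → Sym2 V} {i j : V} {e : E} :
    e ∈ bnd ep i j ↔ ep e = s(i, j) := by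
  simp [bnd]

end Aux

set_option linter.unusedSectionVars false

set_option maxHeartbeats 1000000 in
private lemma part1 {V E : Type*} [Fintype V] [Fintype E] [DecidableEq V] [DecidableEq E]
    [Nonempty E]
    (ep : E → Sym2 V)
    (hloop : ∀ e, ¬ (ep e).IsDiag)
    (hconn : (SimpleGraph.fromRel (fun a b => ∃ e, ep e = s(a, b))).Connected)
    (hodd : ∀ a b : V, a ≠ b → (∃ e, ep e = s(a, b)) →
      Odd (Finset.univ.filter (fun e => ep e = s(a, b))).card)
    (hshare : ∀ i : V,
      2 ≤ {j : V | j ≠ i ∧ ∃ e, ep e = s(i, j)}.ncard →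
      {j : V | 2 ≤ (Finset.univ.filter (fun e => ep e = s(i, j))).card}.Subsingleton)
    (hnocyc : ¬ ∃ (k : ℕ) (c : Fin (k + 3) → V), Function.Injective c ∧
      ∀ t : Fin (k + 3), ∃ e, ep e = s(c t, c (t + 1))) :
    ¬ ∃ A : V → Finset E,
      (∀ i, ∀ e ∈ A i, i ∈ ep e) ∧
      (∀ e, ∃! i, e ∈ A i) ∧
      (∀ i j : V, ((A j).filter (fun e => i ∈ ep e)).card ≤
        ((A i).filter (fun e => i ∈ ep e)).card) := by
  rintro ⟨A, hA1, hA2, hA3⟩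
  classical
  -- `aa i j` : number of edges between i and j assigned to i
  set aa : V → V → ℕ := fun i j => (bnd ep i j ∩ A i).card with haa
  have hvii : ∀ i, ((A i).filter (fun e => i ∈ ep e)) = A i := by
    intro i
    apply Finset.filter_true_of_mem
    intro e he
    exact hA1 i e he
  have hcross : ∀ i j : V, i ≠ j →
      ((A j).filter (fun e => i ∈ ep e)) = bnd ep i j ∩ A j := by
    intro i j hij
    ext e
    simp only [Finset.mem_filter, Finset.mem_inter, mem_bnd]
    constructor
    · rintro ⟨hej, hi⟩
      exact ⟨(Sym2.mem_and_mem_iff hij).mp ⟨hi, hA1 j e hej⟩, hej⟩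
    · rintro ⟨hep, hej⟩
      exact ⟨hej, by rw [hep]; exact Sym2.mem_mk_left i j⟩
  have hEF : ∀ i j : V, i ≠ j → (bnd ep i j ∩ A j).card ≤ (A i).card := by
    intro i j hij
    have := hA3 i j
    rwa [hvii, hcross i j hij] at this
  -- every edge in A s lies in a bundle to a neighbor of s
  have hother : ∀ s : V, ∀ e ∈ A s, ∃ t, t ≠ s ∧ ep e = s(s, t) := by
    intro s e he
    have hs : s ∈ ep e := hA1 s e he
    refine ⟨Sym2.Mem.other' hs, ?_, (Sym2.other_spec' hs).symm⟩
    intro hts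
    have : ep e = s(s, s) := by rw [← Sym2.other_spec' hs, hts]
    exact hloop e (by rw [this]; exact Sym2.mk_isDiag_iff.mpr rfl)
  -- parity: majorities are strict
  have hsum : ∀ i j : V, i ≠ j → aa i j + aa j i = (bnd ep i j).card := by
    intro i j hij
    rw [haa]
    simp only
    rw [← bnd_symm ep i j]
    rw [← Finset.card_union_of_disjoint]
    · congr 1
      apply Finset.Subset.antisymm
      · exact Finset.union_subset Finset.inter_subset_left Finset.inter_subset_left
      · intro e he
        obtain ⟨o, ho, hu⟩ := hA2 e
        have hoep : o ∈ ep e := hA1 o e ho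
        rw [mem_bnd.mp he] at hoep
        rcases Sym2.mem_iff.mp hoep with h | h
        · exact Finset.mem_union_left _ (Finset.mem_inter.mpr ⟨he, h ▸ ho⟩)
        · exact Finset.mem_union_right _ (Finset.mem_inter.mpr ⟨he, h ▸ ho⟩)
    · rw [Finset.disjoint_left]
      rintro e he he'
      obtain ⟨o, ho, hu⟩ := hA2 e
      have hi := hu i (Finset.mem_inter.mp he).2
      have hj := hu j (Finset.mem_inter.mp he').2
      exact hij (hi.trans hj.symm)
  have hne_a : ∀ i j : V, j ≠ i → (∃ e, ep e = s(i, j)) → aa i j ≠ aa j i := by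
    intro i j hji hex heq
    have hoddm := hodd i j (Ne.symm hji) hex
    have : (bnd ep i j).card = (Finset.univ.filter (fun e => ep e = s(i, j))).card := rfl
    rw [← this] at hoddm
    rw [← hsum i j (Ne.symm hji), heq] at hoddm
    obtain ⟨t, ht⟩ := hoddm
    omega
  -- every vertex has a neighbor
  have e0 := Classical.arbitrary E
  obtain ⟨u, w, he0⟩ : ∃ u w, ep e0 = s(u, w) := ⟨(ep e0).out.1, (ep e0).out.2, by
    exact (Quot.out_eq _).symm⟩
  have huw : u ≠ w := fun h => hloop e0 (by rw [he0, h]; exact Sym2.mk_isDiag_iff.mpr rfl)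
  have hnb : ∀ i : V, ∃ j, j ≠ i ∧ ∃ e, ep e = s(i, j) := by
    intro i
    obtain ⟨t, ht⟩ : ∃ t : V, t ≠ i := by
      by_cases h : i = u
      · exact ⟨w, by rw [h]; exact huw.symm⟩
      · exact ⟨u, fun he => h he.symm⟩
    obtain ⟨p⟩ := hconn.preconnected i t
    cases p with
    | nil => exact absurd rfl ht
    | cons hadj q =>
      rename_i c
      rw [SimpleGraph.fromRel_adj] at hadj
      obtain ⟨hne, hrel⟩ := hadj
      refine ⟨c, Ne.symm hne, ?_⟩
      rcases hrel with h | h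
      · exact h
      · obtain ⟨e, he⟩ := h
        exact ⟨e, by rw [he, Sym2.eq_swap]⟩
  by_cases hsrc : ∃ s, ∀ j, (j ≠ s ∧ ∃ e, ep e = s(s, j)) → aa s j < aa j s
  · -- a "source" (all-minority vertex) exists: contradiction via hshare
    obtain ⟨s, hs⟩ := hsrc
    obtain ⟨j0, hj0nbr, hsub0⟩ :
        ∃ j0, (j0 ≠ s ∧ ∃ e, ep e = s(s, j0)) ∧ A s ⊆ bnd ep s j0 := by
      by_cases h2 : ∃ j1 j2, (j1 ≠ s ∧ ∃ e, ep e = s(s, j1)) ∧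
          (j2 ≠ s ∧ ∃ e, ep e = s(s, j2)) ∧ j1 ≠ j2
      · obtain ⟨j1, j2, hj1, hj2, hj12⟩ := h2
        have hcard2 : 2 ≤ {j : V | j ≠ s ∧ ∃ e, ep e = s(s, j)}.ncard := by
          have h1 : j1 ∈ {j : V | j ≠ s ∧ ∃ e, ep e = s(s, j)} := hj1
          have h2' : j2 ∈ {j : V | j ≠ s ∧ ∃ e, ep e = s(s, j)} := hj2
          have := (Set.one_lt_ncard (Set.toFinite _)).mpr ⟨j1, h1, j2, h2', hj12⟩
          omega
        have hsub := hshare s hcard2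
        -- zero on light bundles
        have hlight : ∀ t, t ≠ s → (bnd ep s t).card ≤ 1 → aa s t = 0 := by
          intro t hts hle
          by_cases hex : ∃ e, ep e = s(s, t)
          · have hmin := hs t ⟨hts, hex⟩
            have := hsum s t (Ne.symm hts)
            omega
          · have : bnd ep s t = ∅ := by
              rw [Finset.eq_empty_iff_forall_notMem]
              intro e he
              exact hex ⟨e, mem_bnd.mp he⟩
            rw [haa]
            simp [this]
        by_cases hheavy : ∃ jh, 2 ≤ (bnd ep s jh).card
        · obtain ⟨jh, hjh⟩ := hheavy
          obtain ⟨eh, heh⟩ := Finset.card_pos.mp (by omega : 0 < (bnd ep s jh).card)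
          have hjs : jh ≠ s := by
            intro h
            exact hloop eh (by rw [mem_bnd.mp heh, h]; exact Sym2.mk_isDiag_iff.mpr rfl)
          refine ⟨jh, ⟨hjs, eh, mem_bnd.mp heh⟩, ?_⟩
          intro e he
          obtain ⟨t, hts, hept⟩ := hother s e he
          by_cases hth : 2 ≤ (bnd ep s t).card
          · have : t = jh := hsub hth hjh
            rw [mem_bnd, hept, this]
          · have h0 : aa s t = 0 := hlight t hts (by omega)
            have : e ∈ bnd ep s t ∩ A s := Finset.mem_inter.mpr ⟨mem_bnd.mpr hept, he⟩
            rw [haa] at h0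
            simp only [Finset.card_eq_zero] at h0
            rw [h0] at this
            exact absurd this (Finset.notMem_empty e)
        · -- no heavy bundle: A s is empty
          push_neg at hheavy
          have hAe : A s = ∅ := by
            rw [Finset.eq_empty_iff_forall_notMem]
            intro e he
            obtain ⟨t, hts, hept⟩ := hother s e he
            have h0 : aa s t = 0 := hlight t hts (by have := hheavy t; omega)
            have : e ∈ bnd ep s t ∩ A s := Finset.mem_inter.mpr ⟨mem_bnd.mpr hept, he⟩
            rw [haa] at h0
            simp only [Finset.card_eq_zero] at h0
            rw [h0] at this
            exact absurd this (Finset.notMem_empty e)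
          exact ⟨j1, hj1, by rw [hAe]; exact Finset.empty_subset _⟩
      · push_neg at h2
        obtain ⟨j0, hj0⟩ := hnb s
        refine ⟨j0, hj0, ?_⟩
        intro e he
        obtain ⟨t, hts, hept⟩ := hother s e he
        have : t = j0 := by
          by_contra hne
          exact hne (h2 t j0 ⟨hts, e, hept⟩ hj0)
        rw [mem_bnd, hept, this]
    -- final contradiction
    have h1 : (A s).card = aa s j0 := by
      rw [haa]
      simp only
      rw [Finset.inter_eq_right.mpr hsub0]
    have h2 : aa j0 s ≤ (A s).card := by
      have := hEF s j0 (Ne.symm hj0nbr.1)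
      rw [haa]
      simp only
      rw [bnd_symm ep j0 s]
      exact this
    have h3 : aa s j0 < aa j0 s := hs j0 hj0nbr
    omega
  · -- no source: build an infinite majority-walk, extract a cycle
    push_neg at hsrc
    choose g hg1 hg2 using hsrc
    have hstrict : ∀ s, aa (g s) s < aa s (g s) := by
      intro s
      have hne := hne_a s (g s) (hg1 s).1 (hg1 s).2
      have := hg2 s
      omega
    haveI : Nonempty V := ⟨u⟩
    set x : ℕ → V := fun n => g^[n] u with hx
    have hxs : ∀ n, x (n + 1) = g (x n) := by
      intro n
      rw [hx]
      exact Function.iterate_succ_apply' g n u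
    refine hnocyc (seq_cycle (fun a b => ∃ e, ep e = s(a, b)) x ?_ ?_ ?_)
    · intro n
      rw [hxs n]
      exact (hg1 (x n)).2
    · intro n
      rw [hxs n]
      exact Ne.symm (hg1 (x n)).1
    · intro n heq
      have m1 := hstrict (x n)
      have m2 := hstrict (x (n + 1))
      rw [← hxs (n + 1), ← heq] at m2
      rw [← hxs n] at m1
      omega




section Win
variable {V : Type*} [DecidableEq V]

/-- winner of the pair `(i,j)`: the endpoint farther from the root, ties broken by `idx`. -/
private def fwin (D idx : V → ℕ) (i j : V) : V :=
  if D i < D j then j else if D j < D i then i else if idx i ≤ idx j then j else i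

private lemma fwin_mem (D idx : V → ℕ) (i j : V) :
    fwin D idx i j = i ∨ fwin D idx i j = j := by
  unfold fwin
  split_ifs <;> simp

private lemma fwin_eq_left (D idx : V → ℕ) {i j : V} (h : D j < D i) :
    fwin D idx i j = i := by
  unfold fwin
  rw [if_neg (by omega), if_pos h]

private lemma fwin_symm {D idx : V → ℕ} (hinj : Function.Injective idx) (i j : V) :
    fwin D idx i j = fwin D idx j i := by
  unfold fwin
  split_ifs <;>
    first
      | rfl
      | (exfalso; omega)
      | exact hinj (le_antisymm ‹_› ‹_›)
      | exact (hinj (le_antisymm ‹_› ‹_›)).symm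
      | exact hinj (by omega)
      | exact (hinj (by omega : idx _ = idx _)).symm

private def glose (D idx : V → ℕ) (i j : V) : V := if fwin D idx i j = j then i else j

private lemma glose_symm {D idx : V → ℕ} (hinj : Function.Injective idx) (i j : V) :
    glose D idx i j = glose D idx j i := by
  by_cases hij : i = j
  · subst hij; rfl
  · unfold glose
    rw [← fwin_symm hinj i j]
    rcases fwin_mem D idx i j with h | h
    · rw [if_neg (by rw [h]; exact hij), if_pos h]
    · rw [if_pos h, if_neg (by rw [h]; exact Ne.symm hij)]

private noncomputable def win (D idx : V → ℕ) (hinj : Function.Injective idx) : Sym2 V → V :=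
  Sym2.lift ⟨fwin D idx, fwin_symm hinj⟩

private noncomputable def lose (D idx : V → ℕ) (hinj : Function.Injective idx) : Sym2 V → V :=
  Sym2.lift ⟨glose D idx, glose_symm hinj⟩

private lemma win_mk (D idx : V → ℕ) (hinj : Function.Injective idx) (a b : V) :
    win D idx hinj s(a, b) = fwin D idx a b := Sym2.lift_mk _ _ _

private lemma lose_mk (D idx : V → ℕ) (hinj : Function.Injective idx) (a b : V) :
    lose D idx hinj s(a, b) = glose D idx a b := Sym2.lift_mk _ _ _

private lemma win_lose_mem (D idx : V → ℕ) (hinj : Function.Injective idx) (q : Sym2 V) :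
    win D idx hinj q ∈ q ∧ lose D idx hinj q ∈ q := by
  induction q using Sym2.ind with
  | _ a b =>
    constructor
    · rw [win_mk]
      rcases fwin_mem D idx a b with h | h <;> rw [h] <;> simp
    · rw [lose_mk]
      unfold glose
      split_ifs <;> simp

private lemma lose_of_win_left (D idx : V → ℕ) {i j : V} (hij : i ≠ j)
    (h : fwin D idx i j = i) : glose D idx i j = j := by
  unfold glose
  rw [if_neg (by rw [h]; exact hij)]

end Win
set_option maxHeartbeats 1000000 in
private lemma part2 {V E : Type*} [Fintype V] [Fintype E] [DecidableEq V] [DecidableEq E]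
    [Nonempty E]
    (ep : E → Sym2 V)
    (hloop : ∀ e, ¬ (ep e).IsDiag)
    (hconn : (SimpleGraph.fromRel (fun a b => ∃ e, ep e = s(a, b))).Connected)
    (hodd : ∀ a b : V, a ≠ b → (∃ e, ep e = s(a, b)) →
      Odd (Finset.univ.filter (fun e => ep e = s(a, b))).card) :
    ∃ (A : V → Finset E) (p : V → ℝ),
      (∀ i, ∀ e ∈ A i, i ∈ ep e) ∧
      (∀ e, ∃! i, e ∈ A i) ∧
      (∀ i, 0 ≤ p i) ∧
      (∀ i j : V, (((A j).filter (fun e => i ∈ ep e)).card : ℝ) + p j ≤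
        (((A i).filter (fun e => i ∈ ep e)).card : ℝ) + p i) ∧
      ∑ i, p i = 1 := by
  classical
  haveI : Nonempty V := ⟨(ep (Classical.arbitrary E)).out.1⟩
  set G := SimpleGraph.fromRel (fun a b : V => ∃ e, ep e = s(a, b)) with hG
  set r := Classical.arbitrary V with hr
  set D : V → ℕ := fun i => G.dist i r with hD
  set idx : V → ℕ := fun i => (Fintype.equivFin V i : ℕ) with hidx
  have hinj : Function.Injective idx := fun a b h =>
    (Fintype.equivFin V).injective (Fin.val_injective h)
  -- choose majority subsets of each bundle
  have hSex : ∀ q : Sym2 V, ∃ t ⊆ Finset.univ.filter (fun e => ep e = q),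
      t.card = ((Finset.univ.filter (fun e : E => ep e = q)).card + 1) / 2 :=
    fun q => Finset.exists_subset_card_eq (by omega)
  choose S hS1 hS2 using hSex
  set owner : E → V := fun e =>
    if e ∈ S (ep e) then win D idx hinj (ep e) else lose D idx hinj (ep e) with howner
  have howner_mem : ∀ e, owner e ∈ ep e := by
    intro e
    rw [howner]
    simp only
    split_ifs
    · exact (win_lose_mem D idx hinj (ep e)).1
    · exact (win_lose_mem D idx hinj (ep e)).2
  set A : V → Finset E := fun i => Finset.univ.filter (fun e => owner e = i) with hA
  have hmemA : ∀ e i, e ∈ A i ↔ owner e = i := by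
    intro e i
    simp [hA]
  have hA1 : ∀ i, ∀ e ∈ A i, i ∈ ep e := by
    intro i e he
    rw [hmemA] at he
    rw [← he]
    exact howner_mem e
  have hA2 : ∀ e, ∃! i, e ∈ A i := by
    intro e
    refine ⟨owner e, (hmemA e _).mpr rfl, fun y hy => ((hmemA e y).mp hy).symm⟩
  -- bundle notation
  have hcross : ∀ i j : V, i ≠ j →
      ((A j).filter (fun e => i ∈ ep e)) =
        (Finset.univ.filter (fun e => ep e = s(i, j))) ∩ A j := by
    intro i j hij
    ext e
    simp only [Finset.mem_filter, Finset.mem_inter, Finset.mem_univ, true_and]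
    constructor
    · rintro ⟨hej, hi⟩
      exact ⟨(Sym2.mem_and_mem_iff hij).mp ⟨hi, hA1 j e hej⟩, hej⟩
    · rintro ⟨hep, hej⟩
      exact ⟨hej, by rw [hep]; exact Sym2.mem_mk_left i j⟩
  have hvii : ∀ i, ((A i).filter (fun e => i ∈ ep e)) = A i := by
    intro i
    apply Finset.filter_true_of_mem
    intro e he
    exact hA1 i e he
  -- winner/loser cardinalities in a bundle
  have hwcard : ∀ i j : V, i ≠ j → fwin D idx i j = i →
      ((Finset.univ.filter (fun e => ep e = s(i, j))) ∩ A i).card =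
        ((Finset.univ.filter (fun e : E => ep e = s(i, j))).card + 1) / 2 ∧
      ((Finset.univ.filter (fun e => ep e = s(i, j))) ∩ A j).card =
        (Finset.univ.filter (fun e : E => ep e = s(i, j))).card -
          ((Finset.univ.filter (fun e : E => ep e = s(i, j))).card + 1) / 2 := by
    intro i j hij hw
    have howq : ∀ e, ep e = s(i, j) → owner e = if e ∈ S s(i, j) then i else j := by
      intro e he
      rw [howner]
      simp only [he]
      rw [win_mk, lose_mk, hw, lose_of_win_left D idx hij hw]
    have heqi : (Finset.univ.filter (fun e => ep e = s(i, j))) ∩ A i = S s(i, j) := by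
      ext e
      simp only [Finset.mem_inter, Finset.mem_filter, Finset.mem_univ, true_and, hmemA]
      constructor
      · rintro ⟨he, hown⟩
        rw [howq e he] at hown
        by_contra hmem
        rw [if_neg hmem] at hown
        exact hij hown.symm
      · intro hmem
        have he : ep e = s(i, j) := by
          have := hS1 s(i, j) hmem
          simpa using this
        exact ⟨he, by rw [howq e he, if_pos hmem]⟩
    have heqj : (Finset.univ.filter (fun e => ep e = s(i, j))) ∩ A j =
        (Finset.univ.filter (fun e => ep e = s(i, j))) \ S s(i, j) := by
      ext e
      simp only [Finset.mem_inter, Finset.mem_filter, Finset.mem_univ, true_and,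
        Finset.mem_sdiff, hmemA]
      constructor
      · rintro ⟨he, hown⟩
        rw [howq e he] at hown
        refine ⟨he, ?_⟩
        intro hmem
        rw [if_pos hmem] at hown
        exact hij hown
      · rintro ⟨he, hmem⟩
        exact ⟨he, by rw [howq e he, if_neg hmem]⟩
    constructor
    · rw [heqi, hS2]
    · rw [heqj, Finset.card_sdiff_of_subset (hS1 _), hS2]
  -- basic bounds
  have hsinglebound : ∀ i j : V,
      ((Finset.univ.filter (fun e => ep e = s(i, j))) ∩ A i).card ≤ (A i).card :=
    fun i j => Finset.card_le_card Finset.inter_subset_right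
  have hdoublebound : ∀ i j j' : V, j ≠ j' →
      ((Finset.univ.filter (fun e => ep e = s(i, j))) ∩ A i).card +
      ((Finset.univ.filter (fun e => ep e = s(i, j'))) ∩ A i).card ≤ (A i).card := by
    intro i j j' hjj
    rw [← Finset.card_union_of_disjoint]
    · apply Finset.card_le_card
      exact Finset.union_subset Finset.inter_subset_right Finset.inter_subset_right
    · rw [Finset.disjoint_left]
      rintro e he he'
      have h1 : ep e = s(i, j) := by
        have := (Finset.mem_inter.mp he).1
        simpa using this
      have h2 : ep e = s(i, j') := by
        have := (Finset.mem_inter.mp he').1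
        simpa using this
      rw [h1] at h2
      rcases Sym2.eq_iff.mp h2 with ⟨-, h⟩ | ⟨h, h'⟩
      · exact hjj h
      · exact hjj (h'.trans h)
  -- distance facts
  have hDr : D r = 0 := by rw [hD]; exact SimpleGraph.dist_self
  have hDpos : ∀ i : V, i ≠ r → 0 < D i := fun i hi => hconn.pos_dist_of_ne hi
  have hdesc : ∀ i : V, i ≠ r → ∃ j, (∃ e, ep e = s(i, j)) ∧ D j < D i ∧ j ≠ i := by
    intro i hi
    obtain ⟨p, hp⟩ := hconn.exists_walk_length_eq_dist i r
    cases p with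
    | nil =>
      exact absurd rfl hi
    | cons hadj q =>
      rename_i c
      rw [SimpleGraph.fromRel_adj] at hadj
      obtain ⟨hne, hrel⟩ := hadj
      have hlen : q.length + 1 = G.dist i r := by simpa using hp
      have hDc : D c < D i := by
        have h1 : G.dist c r ≤ q.length := SimpleGraph.dist_le q
        simp only [hD]
        omega
      refine ⟨c, ?_, hDc, Ne.symm hne⟩
      rcases hrel with h | h
      · exact h
      · obtain ⟨e, he⟩ := h
        exact ⟨e, by rw [he, Sym2.eq_swap]⟩
  -- every non-root vertex owns at least one edge from its descending bundle
  have hval1 : ∀ i : V, i ≠ r → ∃ j, j ≠ i ∧ fwin D idx i j = i ∧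
      1 ≤ ((Finset.univ.filter (fun e => ep e = s(i, j))) ∩ A i).card ∧
      ((Finset.univ.filter (fun e : E => ep e = s(i, j))) ∩ A i).card =
        ((Finset.univ.filter (fun e : E => ep e = s(i, j))).card + 1) / 2 := by
    intro i hi
    obtain ⟨j, hex, hDj, hji⟩ := hdesc i hi
    have hw : fwin D idx i j = i := fwin_eq_left D idx hDj
    have hcard := (hwcard i j (Ne.symm hji) hw).1
    obtain ⟨e, he⟩ := hex
    have hnonempty : 0 < (Finset.univ.filter (fun e : E => ep e = s(i, j))).card := by
      apply Finset.card_pos.mpr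
      exact ⟨e, by simp [he]⟩
    exact ⟨j, hji, hw, by omega, hcard⟩
  refine ⟨A, fun i => if i = r then 1 else 0, hA1, hA2, ?_, ?_, ?_⟩
  · intro i
    dsimp only
    split_ifs <;> norm_num
  · intro i j
    dsimp only
    by_cases hij : i = j
    · subst hij
      exact le_refl _
    -- cross term
    rw [hcross i j hij, hvii]
    set B : Finset E := Finset.univ.filter (fun e => ep e = s(i, j)) with hBdef
    by_cases hm : B.card = 0
    · have hBj : (B ∩ A j).card = 0 := by
        have : B ∩ A j ⊆ B := Finset.inter_subset_left
        have := Finset.card_le_card this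
        omega
      rw [hBj]
      by_cases hjr : j = r
      · have hir : i ≠ r := fun h => hij (h.trans hjr.symm)
        rw [if_pos hjr, if_neg hir]
        obtain ⟨j', hj'1, hj'2, hj'3, hj'4⟩ := hval1 i hir
        have : 1 ≤ (A i).card := le_trans hj'3 (hsinglebound i j')
        have hcast : (1 : ℝ) ≤ ((A i).card : ℝ) := by exact_mod_cast this
        push_cast
        linarith
      · rw [if_neg hjr]
        have : (0 : ℝ) ≤ ((A i).card : ℝ) := by positivity
        split_ifs <;> push_cast <;> linarith
    · -- adjacent case
      have hex : ∃ e, ep e = s(i, j) := by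
        obtain ⟨e, he⟩ := Finset.card_pos.mp (by omega : 0 < B.card)
        exact ⟨e, by simpa [hBdef] using he⟩
      obtain ⟨t, ht⟩ := hodd i j hij hex
      have hmodd : B.card = 2 * t + 1 := by rw [hBdef]; omega
      rcases fwin_mem D idx i j with hw | hw
      · -- i wins this bundle
        obtain ⟨hci, hcj⟩ := hwcard i j hij hw
        have hcj' : (B ∩ A j).card = t := by rw [hBdef] at hmodd ⊢; omega
        have hci' : (B ∩ A i).card = t + 1 := by rw [hBdef] at hmodd ⊢; omega
        have hAi : t + 1 ≤ (A i).card := hci' ▸ hsinglebound i j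
        rw [hcj']
        by_cases hjr : j = r
        · have hir : i ≠ r := fun h => hij (h.trans hjr.symm)
          rw [if_pos hjr, if_neg hir]
          have : ((t : ℝ) + 1) ≤ ((A i).card : ℝ) := by exact_mod_cast hAi
          push_cast
          linarith
        · rw [if_neg hjr]
          have : ((t : ℝ) + 1) ≤ ((A i).card : ℝ) := by exact_mod_cast hAi
          split_ifs <;> push_cast <;> linarith
      · -- j wins this bundle
        have hw' : fwin D idx j i = j := by rw [← fwin_symm hinj]; exact hw
        obtain ⟨hcj, hci⟩ := hwcard j i (Ne.symm hij) hw'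
        have hsw : (Finset.univ.filter (fun e : E => ep e = s(j, i))) = B := by
          rw [hBdef]
          apply Finset.filter_congr
          intro e _
          rw [Sym2.eq_swap]
        rw [hsw] at hcj hci
        have hcj' : (B ∩ A j).card = t + 1 := by omega
        have hci' : (B ∩ A i).card = t := by omega
        have hAi : t ≤ (A i).card := hci' ▸ hsinglebound i j
        rw [hcj']
        by_cases hir : i = r
        · have hjr' : j ≠ r := fun h => hij (hir.trans h.symm)
          rw [if_pos hir, if_neg hjr']
          have : (t : ℝ) ≤ ((A i).card : ℝ) := by exact_mod_cast hAi
          push_cast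
          linarith
        · by_cases hjr : j = r
          · -- impossible: i ≠ r would beat r
            exfalso
            have hDj : D j < D i := by rw [hjr, hDr]; exact hDpos i hir
            have : fwin D idx i j = i := fwin_eq_left D idx hDj
            rw [this] at hw
            exact hij hw
          · rw [if_neg hjr, if_neg hir]
            -- need t + 1 ≤ (A i).card using a second bundle
            obtain ⟨j', hj'1, hj'2, hj'3, hj'4⟩ := hval1 i hir
            have hjj' : j ≠ j' := by
              intro h
              subst h
              rw [hj'2] at hw
              exact hij hw
            have hdb := hdoublebound i j j' hjj'
            rw [← hBdef] at hdb
            have : t + 1 ≤ (A i).card := by omega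
            have : ((t : ℝ) + 1) ≤ ((A i).card : ℝ) := by exact_mod_cast this
            push_cast
            linarith
  · simp

/-- A connected multigraph (with at least one edge; no loops) where every edge
is critical (valued 1 by both endpoints, so agent `i`'s value of a bundle is
the number of its edges incident to `i`), such that: (b) every pair of
adjacent vertices is joined by an odd number of edges, (c) every vertex with
at least two neighbors shares more than one edge with at most one neighbor,
and (d) there is no simple cycle of length at least 3.  Then no envy-free
orientation (with zero payments) exists, but there is an envy-free orientation
with payments of total subsidy exactly 1. -/
theorem stmt15 {V E : Type*} [Fintype V] [Fintype E] [DecidableEq V] [DecidableEq E]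
    [Nonempty E]
    (ep : E → Sym2 V)
    (hloop : ∀ e, ¬ (ep e).IsDiag)
    (hconn : (SimpleGraph.fromRel (fun a b => ∃ e, ep e = s(a, b))).Connected)
    (hodd : ∀ a b : V, a ≠ b → (∃ e, ep e = s(a, b)) →
      Odd (Finset.univ.filter (fun e => ep e = s(a, b))).card)
    (hshare : ∀ i : V,
      2 ≤ {j : V | j ≠ i ∧ ∃ e, ep e = s(i, j)}.ncard →
      {j : V | 2 ≤ (Finset.univ.filter (fun e => ep e = s(i, j))).card}.Subsingleton)
    (hnocyc : ¬ ∃ (k : ℕ) (c : Fin (k + 3) → V), Function.Injective c ∧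
      ∀ t : Fin (k + 3), ∃ e, ep e = s(c t, c (t + 1))) :
    (¬ ∃ A : V → Finset E,
      (∀ i, ∀ e ∈ A i, i ∈ ep e) ∧
      (∀ e, ∃! i, e ∈ A i) ∧
      (∀ i j : V, ((A j).filter (fun e => i ∈ ep e)).card ≤
        ((A i).filter (fun e => i ∈ ep e)).card)) ∧
    (∃ (A : V → Finset E) (p : V → ℝ),
      (∀ i, ∀ e ∈ A i, i ∈ ep e) ∧
      (∀ e, ∃! i, e ∈ A i) ∧
      (∀ i, 0 ≤ p i) ∧
      (∀ i j : V, (((A j).filter (fun e => i ∈ ep e)).card : ℝ) + p j ≤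
        (((A i).filter (fun e => i ∈ ep e)).card : ℝ) + p i) ∧
      ∑ i, p i = 1) :=
  ⟨part1 ep hloop hconn hodd hshare hnocyc, part2 ep hloop hconn hodd⟩
end

section
/- Let agents 1, ..., h form a cycle with monotone valuations, bundles A_1, ..., A_h, sub-bundles P_{i+1} ⊆ A_{i+1} (indices mod h), and thresholds b_i with v_i(A_i) ≥ b_i for all i. If for every i either v_i(P_{i+1}) ≤ b_i, or v_i(P_{i+1}) − b_i ≤ v_{i+1}(P_{i+1}) − b_{i+1}, then the cycle weight ∑_{i=1}^{h} (v_i(P_{i+1}) − v_i(A_i)) is at most 0. -/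
/-- Agents `0, …, h-1` on a cycle (indices mod `h`) with monotone valuations,
bundles `A i`, sub-bundles `P i ⊆ A i` (agent `i` only values `P (i+1)`
within `A (i+1)`), and thresholds `b i ≤ v i (A i)`.  If for every `i`,
either `v i (P (i+1)) ≤ b i` or
`v i (P (i+1)) - b i ≤ v (i+1) (P (i+1)) - b (i+1)`, then the cycle weight
`∑ i, (v i (P (i+1)) - v i (A i))` is at most 0. -/
theorem stmt18 {M : Type*} {h : ℕ} [NeZero h]
    (v : Fin h → Finset M → ℝ)
    (hmono : ∀ i, ∀ S T : Finset M, S ⊆ T → v i S ≤ v i T)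
    (A P : Fin h → Finset M)
    (hP : ∀ i, P i ⊆ A i)
    (b : Fin h → ℝ)
    (hb : ∀ i, b i ≤ v i (A i))
    (halt : ∀ i : Fin h, v i (P (i + 1)) ≤ b i ∨
      v i (P (i + 1)) - b i ≤ v (i + 1) (P (i + 1)) - b (i + 1)) :
    ∑ i : Fin h, (v i (P (i + 1)) - v i (A i)) ≤ 0 := by
  set c : Fin h → ℝ := fun j => v j (A j) - b j with hc
  have hc0 : ∀ j, 0 ≤ c j := fun j => by simp [hc, hb j]
  have key : ∀ i : Fin h, v i (P (i + 1)) - v i (A i) ≤ c (i + 1) - c i := by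
    intro i
    rcases halt i with hle | hle
    · simp only [hc]
      linarith [hb (i + 1)]
    · have hPA : v (i + 1) (P (i + 1)) ≤ v (i + 1) (A (i + 1)) :=
        hmono _ _ _ (hP (i + 1))
      simp only [hc]
      linarith
  calc ∑ i : Fin h, (v i (P (i + 1)) - v i (A i))
      ≤ ∑ i : Fin h, (c (i + 1) - c i) := Finset.sum_le_sum fun i _ => key i
    _ = 0 := by
        rw [Finset.sum_sub_distrib]
        have : ∑ i : Fin h, c (i + 1) = ∑ i : Fin h, c i :=
          Fintype.sum_equiv (Equiv.addRight 1) _ _ (fun i => rfl)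
        rw [this]; ring
end
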